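/- arXiv:1809.04249 — 7 statements merged into one kernel-verified Lean document; each statement's English description precedes it below -/
import Mathlib

section
/- The dual problem attains its minimum: there exist u* ∈ ℝ^m, y^{(t),*} ∈ ℝ^m, z^{(t),*} ∈ ℝ^{m_t}, V^{(t),*} ∈ ℝ^{m×m_t} feasible for the dual problem such that max_{1≤i≤m} u*_i + ∑_{t=1}^N ⟨z^{(t),*}, a^{(t)}⟩ ≤ max_{1≤i≤m} u_i + ∑_{t=1}^N ⟨z^{(t)}, a^{(t)}⟩ for every feasible (u, {y^{(t)}}, {z^{(t)}}, {V^{(t)}}). -/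
/-- Feasibility for the dual problem: `∑_t y^{(t)} = u` and
`V^{(t)} = D^{(t)} + y^{(t)} e_{m_t}ᵀ + e_m (z^{(t)})ᵀ ≥ 0` for every `t`. -/
def DualFeasible (N m : ℕ) (mt : Fin N → ℕ)
    (D : ∀ t : Fin N, Matrix (Fin m) (Fin (mt t)) ℝ)
    (u : Fin m → ℝ) (y : Fin N → Fin m → ℝ)
    (z : ∀ t : Fin N, Fin (mt t) → ℝ)
    (V : ∀ t : Fin N, Matrix (Fin m) (Fin (mt t)) ℝ) : Prop :=
  (∀ i, ∑ t, y t i = u i) ∧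
    ∀ t : Fin N,
      (∀ i j, V t i j = D t i j + y t i + z t j) ∧
      (∀ i j, 0 ≤ V t i j)

/-- The dual objective `max_{1≤i≤m} u_i + ∑_t ⟨z^{(t)}, a^{(t)}⟩`. -/
noncomputable def dualObj (N m : ℕ) (mt : Fin N → ℕ)
    (a : ∀ t : Fin N, Fin (mt t) → ℝ)
    (u : Fin m → ℝ) (z : ∀ t : Fin N, Fin (mt t) → ℝ) : ℝ :=
  (⨆ i, u i) + ∑ t, ∑ j, z t j * a t j

/-!
After eliminating `u` and `V`, and taking each `y^{(t)}` as small as feasibility allows (the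
c-transform of `z^{(t)}`), the dual objective becomes a continuous function of `z` alone. This
function is unchanged when a constant is subtracted from one `z^{(t)}` (because `∑ⱼ a^{(t)}_j = 1`),
so we may assume `min_j z^{(t)}_j = 0`; capping the entries of `z` at `2 max |D|` then only lowers
the objective. Hence the infimum over all `z` is the infimum over a compact box, where it is attained.
-/

open Finset

theorem Continuous.ciSup_of_fintype {X ι L : Type*} [TopologicalSpace X] [Fintype ι] [Nonempty ι]
    [ConditionallyCompleteLattice L] [TopologicalSpace L] [ContinuousSup L] {f : ι → X → L}
    (hf : ∀ i, Continuous (f i)) : Continuous fun x => ⨆ i, f i x := by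
  simp_rw [← Finset.sup'_univ_eq_ciSup]
  exact Continuous.finset_sup'_apply univ_nonempty fun i _ => hf i

namespace DualProblem

variable {T I : Type*} {J : T → Type*}

noncomputable def cTransform (D : ∀ t, I → J t → ℝ) (z : ∀ t, J t → ℝ) (t : T) (i : I) : ℝ :=
  ⨆ j, -D t i j - z t j

noncomputable def reducedObj [Fintype T] [Fintype I] [∀ t, Fintype (J t)]
    (a : ∀ t, J t → ℝ) (D : ∀ t, I → J t → ℝ) (z : ∀ t, J t → ℝ) : ℝ :=
  (⨆ i, ∑ t, cTransform D z t i) + ∑ t, ∑ j, z t j * a t j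

variable {a : ∀ t, J t → ℝ} {D : ∀ t, I → J t → ℝ}

theorem cTransform_le {z : ∀ t, J t → ℝ} {t : T} [Nonempty (J t)] {i : I} {y : ℝ}
    (h : ∀ j, 0 ≤ D t i j + y + z t j) : cTransform D z t i ≤ y :=
  ciSup_le fun j => by linarith [h j]

theorem neg_sub_le_cTransform (z : ∀ t, J t → ℝ) (t : T) [Finite (J t)] (i : I) (j : J t) :
    -D t i j - z t j ≤ cTransform D z t i :=
  le_ciSup (f := fun j => -D t i j - z t j) (Finite.bddAbove_range _) j

theorem add_cTransform_add_nonneg (z : ∀ t, J t → ℝ) (t : T) [Finite (J t)] (i : I) (j : J t) :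
    0 ≤ D t i j + cTransform D z t i + z t j := by
  linarith [neg_sub_le_cTransform (D := D) z t i j]

theorem cTransform_sub_const (z : ∀ t, J t → ℝ) (c : T → ℝ) (t : T) [Nonempty (J t)]
    [Finite (J t)] (i : I) :
    cTransform D (fun t j => z t j - c t) t i = cTransform D z t i + c t := by
  rw [cTransform, cTransform, ciSup_add (Finite.bddAbove_range _)]
  congr 1 with j
  ring

/-- Capping `z t` at `2B` does not raise the c-transform as long as `z t` has a nonpositive
entry: a capped entry contributes at most `B - 2B = -B`, which the nonpositive entry already
beats. -/
theorem cTransform_min_le {z : ∀ t, J t → ℝ} {t : T} [Nonempty (J t)] [Finite (J t)] {B : ℝ}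
    (hB : ∀ i j, |D t i j| ≤ B) (hz : ∃ j, z t j ≤ 0) (i : I) :
    cTransform D (fun t j => min (z t j) (2 * B)) t i ≤ cTransform D z t i := by
  obtain ⟨j₀, hj₀⟩ := hz
  refine ciSup_le fun j => ?_
  dsimp only
  rcases min_cases (z t j) (2 * B) with ⟨hmin, -⟩ | ⟨hmin, -⟩ <;> rw [hmin]
  · exact neg_sub_le_cTransform z t i j
  · have := neg_sub_le_cTransform (D := D) z t i j₀
    linarith [abs_le.mp (hB i j), abs_le.mp (hB i j₀)]

variable [Fintype T] [Fintype I] [∀ t, Fintype (J t)] [∀ t, Nonempty (J t)]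

theorem reducedObj_le {u : I → ℝ} {y : T → I → ℝ} {z : ∀ t, J t → ℝ}
    (hy : ∀ i, ∑ t, y t i = u i) (hV : ∀ t i j, 0 ≤ D t i j + y t i + z t j) :
    reducedObj a D z ≤ (⨆ i, u i) + ∑ t, ∑ j, z t j * a t j := by
  refine add_le_add_left (ciSup_mono (Finite.bddAbove_range _) fun i => ?_) _
  rw [← hy i]
  exact sum_le_sum fun t _ => cTransform_le (hV t i)

theorem reducedObj_min_le (ha : ∀ t j, 0 ≤ a t j) {B : ℝ} (hB : ∀ t i j, |D t i j| ≤ B)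
    {z : ∀ t, J t → ℝ} (hz : ∀ t, ∃ j, z t j ≤ 0) :
    reducedObj a D (fun t j => min (z t j) (2 * B)) ≤ reducedObj a D z := by
  refine add_le_add (ciSup_mono (Finite.bddAbove_range _) fun i => ?_) ?_
  · exact sum_le_sum fun t _ => cTransform_min_le (hB t) (hz t) i
  · exact sum_le_sum fun t _ => sum_le_sum fun j _ =>
      mul_le_mul_of_nonneg_right (min_le_left _ _) (ha t j)

variable [Nonempty I]

theorem reducedObj_sub_const (hasum : ∀ t, ∑ j, a t j = 1) (z : ∀ t, J t → ℝ) (c : T → ℝ) :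
    reducedObj a D (fun t j => z t j - c t) = reducedObj a D z := by
  have hlin : ∀ t, ∑ j, (z t j - c t) * a t j = ∑ j, z t j * a t j - c t := fun t => by
    simp only [sub_mul, sum_sub_distrib, ← mul_sum, hasum t, mul_one]
  simp only [reducedObj, cTransform_sub_const, sum_add_distrib, hlin, sum_sub_distrib]
  rw [← ciSup_add (Finite.bddAbove_range _)]
  ring

theorem continuous_reducedObj : Continuous (reducedObj a D) := by
  refine .add (.ciSup_of_fintype fun i => continuous_finsetSum _ fun t _ =>
    .ciSup_of_fintype fun j => ?_) (by fun_prop)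
  exact continuous_const.sub ((continuous_apply j).comp (continuous_apply t))

theorem exists_mem_Icc_reducedObj_le (ha : ∀ t j, 0 ≤ a t j) (hasum : ∀ t, ∑ j, a t j = 1)
    {B : ℝ} (hB : ∀ t i j, |D t i j| ≤ B) (z : ∀ t, J t → ℝ) :
    ∃ z' ∈ Set.Icc 0 (fun _ _ => 2 * B), reducedObj a D z' ≤ reducedObj a D z := by
  set z₀ : ∀ t, J t → ℝ := fun t j => z t j - ⨅ j, z t j
  have hz₀ : ∀ t j, 0 ≤ z₀ t j := fun t j => sub_nonneg.mpr (ciInf_le (Finite.bddBelow_range _) j)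
  have hz₀_zero : ∀ t, ∃ j, z₀ t j ≤ 0 := fun t => by
    obtain ⟨j, hj⟩ := exists_eq_ciInf_of_finite (f := z t)
    exact ⟨j, by simp [z₀, hj]⟩
  refine ⟨fun t j => min (z₀ t j) (2 * B), ⟨fun t j => ?_, fun t j => min_le_right _ _⟩, ?_⟩
  · show (0 : ℝ) ≤ min (z₀ t j) (2 * B)
    have hB₀ : 0 ≤ B := (abs_nonneg _).trans (hB t (Classical.arbitrary I) j)
    exact le_min (hz₀ t j) (by linarith)
  · calc reducedObj a D (fun t j => min (z₀ t j) (2 * B))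
        ≤ reducedObj a D z₀ := reducedObj_min_le ha hB hz₀_zero
      _ = reducedObj a D z := reducedObj_sub_const hasum z _

theorem exists_forall_reducedObj_le (ha : ∀ t j, 0 ≤ a t j) (hasum : ∀ t, ∑ j, a t j = 1) :
    ∃ zstar, ∀ z, reducedObj a D zstar ≤ reducedObj a D z := by
  obtain ⟨B, hB⟩ : ∃ B, ∀ t i j, |D t i j| ≤ B := by
    obtain ⟨B, hB⟩ := (Set.finite_range fun p : Σ t, I × J t => |D p.1 p.2.1 p.2.2|).bddAbove
    exact ⟨B, fun t i j => hB ⟨⟨t, i, j⟩, rfl⟩⟩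
  have hne : (Set.Icc (0 : ∀ t, J t → ℝ) fun _ _ => 2 * B).Nonempty :=
    let ⟨z, hz, _⟩ := exists_mem_Icc_reducedObj_le ha hasum hB 0
    ⟨z, hz⟩
  obtain ⟨zstar, -, hmin⟩ := isCompact_Icc.exists_isMinOn hne
    (continuous_reducedObj (a := a) (D := D)).continuousOn
  refine ⟨zstar, fun z => ?_⟩
  obtain ⟨z', hz', hle⟩ := exists_mem_Icc_reducedObj_le ha hasum hB z
  exact (hmin hz').trans hle

end DualProblem

open DualProblem in
theorem stmt_3_general (N m : ℕ) (hm : 0 < m)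
    (mt : Fin N → ℕ) (hmt : ∀ t, 0 < mt t)
    (D : ∀ t : Fin N, Matrix (Fin m) (Fin (mt t)) ℝ)
    (a : ∀ t : Fin N, Fin (mt t) → ℝ)
    (ha : ∀ t j, 0 ≤ a t j) (hasum : ∀ t, ∑ j, a t j = 1) :
    ∃ (ustar : Fin m → ℝ) (ystar : Fin N → Fin m → ℝ)
      (zstar : ∀ t : Fin N, Fin (mt t) → ℝ)
      (Vstar : ∀ t : Fin N, Matrix (Fin m) (Fin (mt t)) ℝ),
      DualFeasible N m mt D ustar ystar zstar Vstar ∧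
      ∀ (u : Fin m → ℝ) (y : Fin N → Fin m → ℝ)
        (z : ∀ t : Fin N, Fin (mt t) → ℝ)
        (V : ∀ t : Fin N, Matrix (Fin m) (Fin (mt t)) ℝ),
        DualFeasible N m mt D u y z V →
        dualObj N m mt a ustar zstar ≤ dualObj N m mt a u z := by
  have : Nonempty (Fin m) := ⟨⟨0, hm⟩⟩
  have : ∀ t, Nonempty (Fin (mt t)) := fun t => ⟨⟨0, hmt t⟩⟩
  obtain ⟨zstar, hmin⟩ := exists_forall_reducedObj_le (D := D) ha hasum
  refine ⟨fun i => ∑ t, cTransform D zstar t i, cTransform D zstar, zstar,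
    fun t i j => D t i j + cTransform D zstar t i + zstar t j,
    ⟨fun i => rfl, fun t => ⟨fun i j => rfl, add_cTransform_add_nonneg zstar t⟩⟩, ?_⟩
  rintro u y z V ⟨hy, hV⟩
  calc dualObj N m mt a (fun i => ∑ t, cTransform D zstar t i) zstar = reducedObj a D zstar := rfl
    _ ≤ reducedObj a D z := hmin z
    _ ≤ dualObj N m mt a u z := reducedObj_le hy fun t i j => (hV t).1 i j ▸ (hV t).2 i j

/-- the dual problem attains its minimum. -/
theorem stmt_3 (N m : ℕ) (hN : 0 < N) (hm : 0 < m)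
    (mt : Fin N → ℕ) (hmt : ∀ t, 0 < mt t)
    (D : ∀ t : Fin N, Matrix (Fin m) (Fin (mt t)) ℝ)
    (a : ∀ t : Fin N, Fin (mt t) → ℝ)
    (ha : ∀ t j, 0 ≤ a t j) (hasum : ∀ t, ∑ j, a t j = 1) :
    ∃ (ustar : Fin m → ℝ) (ystar : Fin N → Fin m → ℝ)
      (zstar : ∀ t : Fin N, Fin (mt t) → ℝ)
      (Vstar : ∀ t : Fin N, Matrix (Fin m) (Fin (mt t)) ℝ),
      DualFeasible N m mt D ustar ystar zstar Vstar ∧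
      ∀ (u : Fin m → ℝ) (y : Fin N → Fin m → ℝ)
        (z : ∀ t : Fin N, Fin (mt t) → ℝ)
        (V : ∀ t : Fin N, Matrix (Fin m) (Fin (mt t)) ℝ),
        DualFeasible N m mt D u y z V →
        dualObj N m mt a ustar zstar ≤ dualObj N m mt a u z :=
  stmt_3_general N m hm mt hmt D a ha hasum
end

section
/- The dual KKT system is solvable: there exists a tuple (u, {V^{(t)}}, {y^{(t)}}, {z^{(t)}}, λ, {Λ^{(t)}}) satisfying the dual KKT system. -/
/-!
The system is the KKT system of the linear program: minimise `∑ₜ ⟨D⁽ᵗ⁾, Λ⁽ᵗ⁾⟩` over `λ ∈ Δₘ` and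
`Λ⁽ᵗ⁾ ≥ 0` with marginals `λ` and `a⁽ᵗ⁾`. Dualising only the constraints `Λ⁽ᵗ⁾ e = λ`, with
multipliers `y⁽ᵗ⁾`, leaves a Lagrangian on a compact convex primal set times the multiplier space
that is linear in the first and affine in the second variable, so Sion's minimax theorem gives a
saddle point over the primal set times a ball of multipliers. Adding a constant to `y⁽ᵗ⁾` does not
change the Lagrangian on the primal set, and testing the saddle inequality against point masses
bounds the oscillation of each `y⁽ᵗ⁾` independently of the radius. So for a large radius the
normalised multiplier is an interior maximiser of the Lagrangian, which is affine in `y` with slope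
`Λ⁽ᵗ⁾ e - λ`; hence the primal point is feasible. Comparing it with the point mass at a maximiser
of `u = ∑ₜ y⁽ᵗ⁾` and at minimisers of the columns of `D⁽ᵗ⁾ + y⁽ᵗ⁾ eᵀ` yields complementary
slackness, with `z⁽ᵗ⁾ⱼ = -minᵢ (D⁽ᵗ⁾ᵢⱼ + y⁽ᵗ⁾ᵢ)`.
-/

/-- The unit simplex `Δ_m` in `ℝ^m`. -/
def simplexSet (m : ℕ) : Set (Fin m → ℝ) :=
  {w | (∀ i, 0 ≤ w i) ∧ ∑ i, w i = 1}

/-- The dual KKT system. -/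
def DualKKT (N m : ℕ) (mt : Fin N → ℕ)
    (D : ∀ t : Fin N, Matrix (Fin m) (Fin (mt t)) ℝ)
    (a : ∀ t : Fin N, Fin (mt t) → ℝ)
    (u : Fin m → ℝ) (V : ∀ t : Fin N, Matrix (Fin m) (Fin (mt t)) ℝ)
    (y : Fin N → Fin m → ℝ) (z : ∀ t : Fin N, Fin (mt t) → ℝ)
    (lam : Fin m → ℝ) (Lam : ∀ t : Fin N, Matrix (Fin m) (Fin (mt t)) ℝ) : Prop :=
  (lam ∈ simplexSet m ∧ ∑ i, u i * lam i = ⨆ i, u i) ∧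
  (∀ t : Fin N, (∀ i j, 0 ≤ V t i j) ∧ (∀ i j, 0 ≤ Lam t i j) ∧
    ∑ i, ∑ j, Lam t i j * V t i j = 0) ∧
  (∀ t : Fin N, (∀ i, ∑ j, Lam t i j = lam i) ∧ (∀ j, ∑ i, Lam t i j = a t j)) ∧
  (∀ i, ∑ t, y t i = u i) ∧
  (∀ t : Fin N, ∀ i j, V t i j = D t i j + y t i + z t j)

open Finset

lemma quasilinearOn_of_map_combo {E : Type*} [AddCommGroup E] [Module ℝ E] {s : Set E}
    (hs : Convex ℝ s) {f : E → ℝ}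
    (hf : ∀ x y : E, ∀ α β : ℝ, α + β = 1 → f (α • x + β • y) = α * f x + β * f y) :
    QuasilinearOn ℝ s f :=
  ⟨ConvexOn.quasiconvexOn ⟨hs, fun x _ y _ α β _ _ h => (hf x y α β h).le⟩,
    ConcaveOn.quasiconcaveOn ⟨hs, fun x _ y _ α β _ _ h => (hf x y α β h).ge⟩⟩

namespace TransportLP

variable {N m : ℕ} {mt : Fin N → ℕ}
variable (D : ∀ t : Fin N, Matrix (Fin m) (Fin (mt t)) ℝ) (a : ∀ t : Fin N, Fin (mt t) → ℝ)

/- A primal point `(λ, μ)` stands for `λ` and the plans `Λ⁽ᵗ⁾ᵢⱼ = a⁽ᵗ⁾ⱼ * μ t j i`. Each `μ t j`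
is a probability vector, which builds the constraints `(Λ⁽ᵗ⁾)ᵀ e = a⁽ᵗ⁾` into `primalSet`; the
remaining constraints `Λ⁽ᵗ⁾ e = λ` are dualised, `residual a x t` being `Λ⁽ᵗ⁾ e - λ`. -/
abbrev Primal (N m : ℕ) (mt : Fin N → ℕ) : Type :=
  (Fin m → ℝ) × (∀ t : Fin N, Fin (mt t) → Fin m → ℝ)

def primalSet (N m : ℕ) (mt : Fin N → ℕ) : Set (Primal N m mt) :=
  stdSimplex ℝ (Fin m) ×ˢ Set.univ.pi fun _ => Set.univ.pi fun _ => stdSimplex ℝ (Fin m)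

def cost (x : Primal N m mt) : ℝ :=
  ∑ t, ∑ j, a t j * ∑ i, x.2 t j i * D t i j

def residual (x : Primal N m mt) (t : Fin N) (i : Fin m) : ℝ :=
  ∑ j, a t j * x.2 t j i - x.1 i

def lagrangian (x : Primal N m mt) (y : Fin N → Fin m → ℝ) : ℝ :=
  cost D a x + ∑ t, ∑ i, y t i * residual a x t i

def pointMass (p : Fin m) (k : ∀ t, Fin (mt t) → Fin m) : Primal N m mt :=
  (Pi.single p 1, fun t j => Pi.single (k t j) 1)

lemma pointMass_mem (p : Fin m) (k : ∀ t, Fin (mt t) → Fin m) :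
    pointMass p k ∈ primalSet N m mt :=
  ⟨single_mem_stdSimplex ℝ p, fun _ _ _ _ => single_mem_stdSimplex ℝ _⟩

lemma nonempty_primalSet (hm : 0 < m) : (primalSet N m mt).Nonempty :=
  ⟨_, pointMass_mem ⟨0, hm⟩ fun _ _ => ⟨0, hm⟩⟩

lemma isCompact_primalSet : IsCompact (primalSet N m mt) :=
  (isCompact_stdSimplex _ _).prod <|
    isCompact_univ_pi fun _ => isCompact_univ_pi fun _ => isCompact_stdSimplex _ _

lemma convex_primalSet : Convex ℝ (primalSet N m mt) :=
  (convex_stdSimplex _ _).prod <|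
    convex_pi fun _ _ => convex_pi fun _ _ => convex_stdSimplex _ _

lemma sum_residual_eq_zero (hasum : ∀ t, ∑ j, a t j = 1) {x : Primal N m mt}
    (hx : x ∈ primalSet N m mt) (t : Fin N) : ∑ i, residual a x t i = 0 := by
  have hμ (j : Fin (mt t)) : ∑ i, x.2 t j i = 1 := (hx.2 t trivial j trivial).2
  simp only [residual, sum_sub_distrib, hx.1.2]
  rw [sum_comm]
  simp [← mul_sum, hμ, hasum]

lemma continuous_cost : Continuous (cost D a) := by
  unfold cost; fun_prop

lemma continuous_lagrangian :
    Continuous fun p : Primal N m mt × (Fin N → Fin m → ℝ) => lagrangian D a p.1 p.2 := by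
  unfold lagrangian cost residual; fun_prop

lemma cost_combo (x x' : Primal N m mt) (α β : ℝ) :
    cost D a (α • x + β • x') = α * cost D a x + β * cost D a x' := by
  simp only [cost, Prod.snd_add, Prod.smul_snd, Pi.add_apply, Pi.smul_apply, smul_eq_mul,
    add_mul, sum_add_distrib, mul_add, mul_sum]
  simp only [mul_comm, mul_left_comm]

lemma residual_combo (x x' : Primal N m mt) (α β : ℝ) (t : Fin N) (i : Fin m) :
    residual a (α • x + β • x') t i = α * residual a x t i + β * residual a x' t i := by
  simp only [residual, Prod.fst_add, Prod.snd_add, Prod.smul_fst, Prod.smul_snd, Pi.add_apply,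
    Pi.smul_apply, smul_eq_mul, mul_add, sum_add_distrib, mul_left_comm (a t _), ← mul_sum]
  ring

lemma lagrangian_combo_left (x x' : Primal N m mt) (y : Fin N → Fin m → ℝ) (α β : ℝ) :
    lagrangian D a (α • x + β • x') y = α * lagrangian D a x y + β * lagrangian D a x' y := by
  simp only [lagrangian, cost_combo, residual_combo, mul_add, sum_add_distrib,
    mul_left_comm (y _ _), ← mul_sum]
  ring

lemma lagrangian_combo_right (x : Primal N m mt) (y y' : Fin N → Fin m → ℝ) {α β : ℝ}
    (hαβ : α + β = 1) :
    lagrangian D a x (α • y + β • y') = α * lagrangian D a x y + β * lagrangian D a x y' := by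
  simp only [lagrangian, Pi.add_apply, Pi.smul_apply, smul_eq_mul, add_mul, sum_add_distrib,
    mul_assoc, ← mul_sum]
  linear_combination (-cost D a x) * hαβ

lemma lagrangian_add_const (hasum : ∀ t, ∑ j, a t j = 1) {x : Primal N m mt}
    (hx : x ∈ primalSet N m mt) (y : Fin N → Fin m → ℝ) (γ : Fin N → ℝ) :
    lagrangian D a x (fun t i => y t i + γ t) = lagrangian D a x y := by
  simp only [lagrangian, add_mul, sum_add_distrib, ← mul_sum, sum_residual_eq_zero a hasum hx,
    mul_zero, add_zero]

lemma lagrangian_add_single (x : Primal N m mt) (y : Fin N → Fin m → ℝ) (t : Fin N) (i : Fin m)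
    (s : ℝ) :
    lagrangian D a x (y + Pi.single t (Pi.single i s)) =
      lagrangian D a x y + s * residual a x t i := by
  simp [lagrangian, add_mul, sum_add_distrib, Pi.single_apply, ite_apply, add_assoc]

lemma lagrangian_pointMass (p : Fin m) (k : ∀ t, Fin (mt t) → Fin m) (y : Fin N → Fin m → ℝ) :
    lagrangian D a (pointMass p k) y =
      cost D a (pointMass p k) + ∑ t, (∑ j, a t j * y t (k t j) - y t p) := by
  have hy (t : Fin N) : ∑ i, y t i * residual a (pointMass p k) t i =
      ∑ j, a t j * y t (k t j) - y t p := by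
    simp only [residual, pointMass, mul_sub, sum_sub_distrib, mul_sum]
    rw [sum_comm]
    simp [Pi.single_apply, mul_comm]
  rw [lagrangian, funext hy]

lemma lagrangian_eq_of_mem {x : Primal N m mt} (hx : x ∈ primalSet N m mt)
    (y : Fin N → Fin m → ℝ) (z : ∀ t, Fin (mt t) → ℝ) :
    lagrangian D a x y = ∑ t, ∑ i, ∑ j, a t j * x.2 t j i * (D t i j + y t i + z t j) -
      ∑ t, ∑ j, a t j * z t j - ∑ i, (∑ t, y t i) * x.1 i := by
  have hμ (t : Fin N) (j : Fin (mt t)) : ∑ i, x.2 t j i = 1 := (hx.2 t trivial j trivial).2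
  have hD : ∑ t, ∑ i, ∑ j, a t j * x.2 t j i * D t i j = cost D a x := by
    simp only [cost, mul_sum]
    exact sum_congr rfl fun t _ => by rw [sum_comm]; simp only [mul_assoc]
  have hz : ∑ t, ∑ i, ∑ j, a t j * x.2 t j i * z t j = ∑ t, ∑ j, a t j * z t j := by
    refine sum_congr rfl fun t _ => ?_
    rw [sum_comm]
    simp only [mul_right_comm _ _ (z t _), ← mul_sum, hμ, mul_one]
  have hy : ∑ t, ∑ i, ∑ j, a t j * x.2 t j i * y t i - ∑ i, (∑ t, y t i) * x.1 i =
      ∑ t, ∑ i, y t i * residual a x t i := by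
    simp only [residual, mul_sub, sum_sub_distrib, sum_mul, mul_sum]
    rw [sum_comm (s := univ) (t := univ) (f := fun i t => y t i * x.1 i)]
    simp only [mul_comm]
  simp only [mul_add, sum_add_distrib, lagrangian, hD, hz, ← hy]
  ring

lemma exists_isSaddlePointOn_closedBall (hm : 0 < m) {R : ℝ} (hR : 0 ≤ R) :
    ∃ x ∈ primalSet N m mt, ∃ y ∈ Metric.closedBall 0 R,
      IsSaddlePointOn (primalSet N m mt) (Metric.closedBall 0 R) (lagrangian D a) x y := by
  have hcont := continuous_lagrangian D a
  refine Sion.exists_isSaddlePointOn (nonempty_primalSet hm) convex_primalSet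
    isCompact_primalSet (fun y _ => ?_) (fun y _ => ?_) (convex_closedBall 0 R)
    ⟨0, Metric.mem_closedBall_self hR⟩ (isCompact_closedBall 0 R) (fun x _ => ?_) (fun x _ => ?_)
  · exact (hcont.comp (.prodMk_left y)).lowerSemicontinuous.lowerSemicontinuousOn _
  · exact (quasilinearOn_of_map_combo convex_primalSet
      fun x x' α β _ => lagrangian_combo_left D a x x' y α β).1
  · exact (hcont.comp (.prodMk_right x)).upperSemicontinuous.upperSemicontinuousOn _
  · exact (quasilinearOn_of_map_combo (convex_closedBall 0 R)
      fun y y' α β h => lagrangian_combo_right D a x y y' h).2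

lemma sub_le_of_isSaddlePointOn (hasum : ∀ t, ∑ j, a t j = 1) {B R : ℝ}
    (hB : ∀ x ∈ primalSet N m mt, |cost D a x| ≤ B) (hR : 0 ≤ R) {x : Primal N m mt}
    {y : Fin N → Fin m → ℝ} (hx : x ∈ primalSet N m mt)
    (hxy : IsSaddlePointOn (primalSet N m mt) (Metric.closedBall 0 R) (lagrangian D a) x y)
    (t : Fin N) (p q : Fin m) : y t p - y t q ≤ 2 * B := by
  -- the residual of `pointMass p k` is `δ_q - δ_p` in block `t` and zero elsewhere
  set k : ∀ t', Fin (mt t') → Fin m := fun t' _ => if t' = t then q else p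
  have hk : ∑ t', (∑ j, a t' j * y t' (k t' j) - y t' p) = y t q - y t p := by
    rw [sum_eq_single t fun t' _ ht' => by simp [k, ht', ← sum_mul, hasum]] <;>
      simp [k, ← sum_mul, hasum]
  have h := hxy _ (pointMass_mem p k) 0 (Metric.mem_closedBall_self hR)
  rw [lagrangian_pointMass, hk] at h
  simp only [lagrangian, Pi.zero_apply, zero_mul, sum_const_zero, add_zero] at h
  linarith [neg_abs_le (cost D a x), le_abs_self (cost D a (pointMass p k)),
    hB x hx, hB _ (pointMass_mem p k)]

theorem exists_feasible_isMinOn (hm : 0 < m) (hasum : ∀ t, ∑ j, a t j = 1) :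
    ∃ x ∈ primalSet N m mt, ∃ y : Fin N → Fin m → ℝ, (∀ t i, residual a x t i = 0) ∧
      ∀ x' ∈ primalSet N m mt, lagrangian D a x y ≤ lagrangian D a x' y := by
  obtain ⟨B, hB⟩ :=
    isCompact_primalSet.exists_bound_of_continuousOn (continuous_cost D a).continuousOn
  obtain ⟨x₀, hx₀⟩ := nonempty_primalSet (N := N) (mt := mt) hm
  have hB0 : 0 ≤ B := (norm_nonneg _).trans (hB x₀ hx₀)
  set R := 2 * B + 1
  have hR : 0 ≤ R := by positivity
  obtain ⟨x, hx, y, hy, hxy⟩ := exists_isSaddlePointOn_closedBall D a hm hR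
  have hosc := sub_le_of_isSaddlePointOn D a hasum hB hR hx hxy
  let i₀ : Fin m := ⟨0, hm⟩
  set y' : Fin N → Fin m → ℝ := fun t i => y t i + -y t i₀
  have hshift {x'} (hx' : x' ∈ primalSet N m mt) : lagrangian D a x' y' = lagrangian D a x' y :=
    lagrangian_add_const D a hasum hx' y _
  have hy' : ‖y'‖ ≤ 2 * B := by
    refine (pi_norm_le_iff_of_nonneg (by positivity)).2 fun t => ?_
    refine (pi_norm_le_iff_of_nonneg (by positivity)).2 fun i => ?_
    rw [Real.norm_eq_abs, show y' t i = y t i - y t i₀ from (sub_eq_add_neg _ _).symm,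
      abs_sub_le_iff]
    exact ⟨hosc t i i₀, hosc t i₀ i⟩
  -- `lagrangian D a x` is affine in `y` and maximal on the ball at its interior point `y'`
  have hres_le (t : Fin N) (i : Fin m) {s : ℝ} (hs : |s| = 1) : s * residual a x t i ≤ 0 := by
    have hmem : y' + Pi.single t (Pi.single i s) ∈ Metric.closedBall 0 R := by
      rw [mem_closedBall_zero_iff]
      calc ‖y' + Pi.single t (Pi.single i s)‖ ≤ ‖y'‖ + 1 := by
            simpa [Pi.norm_single, hs] using norm_add_le y' (Pi.single t (Pi.single i s))
        _ ≤ R := by linarith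
    have h := hxy x hx _ hmem
    rw [lagrangian_add_single, hshift hx] at h
    linarith
  refine ⟨x, hx, y', fun t i => ?_, fun x' hx' => ?_⟩
  · linarith [hres_le t i (s := 1) (by simp), hres_le t i (s := -1) (by simp)]
  · rw [hshift hx, hshift hx']
    exact hxy x' hx' y hy

lemma complementary_slackness (ha : ∀ t j, 0 ≤ a t j) {x : Primal N m mt}
    (hx : x ∈ primalSet N m mt) {y : Fin N → Fin m → ℝ}
    (hmin : ∀ x' ∈ primalSet N m mt, lagrangian D a x y ≤ lagrangian D a x' y)
    {p : Fin m} (hp : ∀ i, ∑ t, y t i ≤ ∑ t, y t p) {k : ∀ t, Fin (mt t) → Fin m}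
    {z : ∀ t, Fin (mt t) → ℝ} (hzV : ∀ t i j, 0 ≤ D t i j + y t i + z t j)
    (hzk : ∀ t j, D t (k t j) j + y t (k t j) + z t j = 0) :
    (∀ t, ∑ i, ∑ j, a t j * x.2 t j i * (D t i j + y t i + z t j) = 0) ∧
      ∑ i, (∑ t, y t i) * x.1 i = ∑ t, y t p := by
  have hterm (t : Fin N) (i : Fin m) (j : Fin (mt t)) :
      0 ≤ a t j * x.2 t j i * (D t i j + y t i + z t j) :=
    mul_nonneg (mul_nonneg (ha t j) ((hx.2 t trivial j trivial).1 i)) (hzV t i j)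
  have hsum (t : Fin N) : 0 ≤ ∑ i, ∑ j, a t j * x.2 t j i * (D t i j + y t i + z t j) :=
    sum_nonneg fun i _ => sum_nonneg fun j _ => hterm t i j
  have hzero (t : Fin N) (i : Fin m) (j : Fin (mt t)) :
      a t j * (Pi.single (k t j) 1 : Fin m → ℝ) i * (D t i j + y t i + z t j) = 0 := by
    rcases eq_or_ne i (k t j) with rfl | h
    · simp [hzk]
    · simp [Pi.single_eq_of_ne h]
  have hup : ∑ i, (∑ t, y t i) * x.1 i ≤ ∑ t, y t p :=
    calc ∑ i, (∑ t, y t i) * x.1 i ≤ ∑ i, (∑ t, y t p) * x.1 i :=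
          sum_le_sum fun i _ => mul_le_mul_of_nonneg_right (hp i) (hx.1.1 i)
      _ = ∑ t, y t p := by rw [← mul_sum, hx.1.2, mul_one]
  have hgap := hmin _ (pointMass_mem p k)
  rw [lagrangian_eq_of_mem D a hx y z, lagrangian_eq_of_mem D a (pointMass_mem p k) y z] at hgap
  simp only [pointMass, hzero, sum_const_zero] at hgap
  simp only [Pi.single_apply, mul_ite, mul_one, mul_zero, sum_ite_eq', mem_univ, if_true] at hgap
  have htotal : ∑ t, ∑ i, ∑ j, a t j * x.2 t j i * (D t i j + y t i + z t j) = 0 := by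
    linarith [sum_nonneg fun t (_ : t ∈ univ) => hsum t]
  exact ⟨fun t => (sum_eq_zero_iff_of_nonneg fun t _ => hsum t).1 htotal t (mem_univ t),
    by linarith⟩

theorem exists_dualKKT_of_isMinOn (hm : 0 < m) (ha : ∀ t j, 0 ≤ a t j) {x : Primal N m mt}
    (hx : x ∈ primalSet N m mt) {y : Fin N → Fin m → ℝ} (hres : ∀ t i, residual a x t i = 0)
    (hmin : ∀ x' ∈ primalSet N m mt, lagrangian D a x y ≤ lagrangian D a x' y) :
    ∃ (u : Fin m → ℝ) (V : ∀ t : Fin N, Matrix (Fin m) (Fin (mt t)) ℝ)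
      (y : Fin N → Fin m → ℝ) (z : ∀ t : Fin N, Fin (mt t) → ℝ)
      (lam : Fin m → ℝ) (Lam : ∀ t : Fin N, Matrix (Fin m) (Fin (mt t)) ℝ),
      DualKKT N m mt D a u V y z lam Lam := by
  have : Nonempty (Fin m) := ⟨⟨0, hm⟩⟩
  obtain ⟨p, hp⟩ := Finite.exists_max fun i => ∑ t, y t i
  choose k hk using fun t j => Finite.exists_min fun i => D t i j + y t i
  set z : ∀ t, Fin (mt t) → ℝ := fun t j => -(D t (k t j) j + y t (k t j))
  have hzV (t : Fin N) (i : Fin m) (j : Fin (mt t)) : 0 ≤ D t i j + y t i + z t j := by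
    linarith [hk t j i]
  obtain ⟨hcompl, hmax⟩ :=
    complementary_slackness D a ha hx hmin hp hzV fun t j => add_neg_cancel _
  have hμ (t : Fin N) (j : Fin (mt t)) : x.2 t j ∈ stdSimplex ℝ (Fin m) := hx.2 t trivial j trivial
  refine ⟨fun i => ∑ t, y t i, fun t => Matrix.of fun i j => D t i j + y t i + z t j, y, z, x.1,
    fun t => Matrix.of fun i j => a t j * x.2 t j i, ⟨hx.1, ?_⟩,
    fun t => ⟨hzV t, fun i j => mul_nonneg (ha t j) ((hμ t j).1 i), hcompl t⟩,
    fun t => ⟨fun i => sub_eq_zero.1 (hres t i), fun j => ?_⟩, fun i => rfl, fun t i j => rfl⟩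
  · rw [le_antisymm (ciSup_le hp) (le_ciSup (Set.finite_range fun i => ∑ t, y t i).bddAbove p)]
    exact hmax
  · simp only [Matrix.of_apply, ← mul_sum, (hμ t j).2, mul_one]

end TransportLP

theorem stmt_4_general (N m : ℕ) (hm : 0 < m)
    (mt : Fin N → ℕ)
    (D : ∀ t : Fin N, Matrix (Fin m) (Fin (mt t)) ℝ)
    (a : ∀ t : Fin N, Fin (mt t) → ℝ)
    (ha : ∀ t j, 0 ≤ a t j) (hasum : ∀ t, ∑ j, a t j = 1) :
    ∃ (u : Fin m → ℝ) (V : ∀ t : Fin N, Matrix (Fin m) (Fin (mt t)) ℝ)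
      (y : Fin N → Fin m → ℝ) (z : ∀ t : Fin N, Fin (mt t) → ℝ)
      (lam : Fin m → ℝ) (Lam : ∀ t : Fin N, Matrix (Fin m) (Fin (mt t)) ℝ),
      DualKKT N m mt D a u V y z lam Lam := by
  obtain ⟨x, hx, y, hres, hmin⟩ := TransportLP.exists_feasible_isMinOn D a hm hasum
  exact TransportLP.exists_dualKKT_of_isMinOn D a hm ha hx hres hmin

/-- the dual KKT system is solvable. -/
theorem stmt_4 (N m : ℕ) (hN : 0 < N) (hm : 0 < m)
    (mt : Fin N → ℕ) (hmt : ∀ t, 0 < mt t)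
    (D : ∀ t : Fin N, Matrix (Fin m) (Fin (mt t)) ℝ)
    (a : ∀ t : Fin N, Fin (mt t) → ℝ)
    (ha : ∀ t j, 0 ≤ a t j) (hasum : ∀ t, ∑ j, a t j = 1) :
    ∃ (u : Fin m → ℝ) (V : ∀ t : Fin N, Matrix (Fin m) (Fin (mt t)) ℝ)
      (y : Fin N → Fin m → ℝ) (z : ∀ t : Fin N, Fin (mt t) → ℝ)
      (lam : Fin m → ℝ) (Lam : ∀ t : Fin N, Matrix (Fin m) (Fin (mt t)) ℝ),
      DualKKT N m mt D a u V y z lam Lam :=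
  stmt_4_general N m hm mt D a ha hasum
end

section
/- If (u*, {V^{(t),*}}, {y^{(t),*}}, {z^{(t),*}}, λ*, {Λ^{(t),*}}) satisfies the dual KKT system, then (u*, {y^{(t),*}}, {z^{(t),*}}, {V^{(t),*}}) is an optimal solution of the dual problem: it is feasible for the dual problem and max_{1≤i≤m} u*_i + ∑_{t=1}^N ⟨z^{(t),*}, a^{(t)}⟩ ≤ max_{1≤i≤m} u_i + ∑_{t=1}^N ⟨z^{(t)}, a^{(t)}⟩ for every feasible (u, {y^{(t)}}, {z^{(t)}}, {V^{(t)}}). -/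
/- Weak duality: pairing a feasible point with the multipliers `Λ^{(t)} ≥ 0` of a KKT point,
`∑_t ⟨Λ^{(t)}, V^{(t)}⟩ ≥ 0` expands, through the row sums `λ` and column sums `a^{(t)}`, to
`⟨u, λ⟩ + ∑_t ⟨z^{(t)}, a^{(t)}⟩ ≥ -∑_t ⟨Λ^{(t)}, D^{(t)}⟩`, and `⟨u, λ⟩ ≤ max_i u_i` on the simplex.
Complementary slackness and `⟨u*, λ*⟩ = max_i u*_i` make both inequalities equalities at the KKT
point, so its objective attains the lower bound. -/

open Finset

theorem sum_mul_le_iSup_of_nonneg_of_sum_eq_one {ι : Type*} [Fintype ι] (u w : ι → ℝ)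
    (hw : ∀ i, 0 ≤ w i) (hw_sum : ∑ i, w i = 1) :
    ∑ i, u i * w i ≤ ⨆ i, u i :=
  calc ∑ i, u i * w i ≤ ∑ i, (⨆ k, u k) * w i :=
        sum_le_sum fun i _ =>
          mul_le_mul_of_nonneg_right (le_ciSup (Finite.bddAbove_range u) i) (hw i)
    _ = ⨆ k, u k := by rw [← mul_sum, hw_sum, mul_one]

theorem sum_sum_mul_eq_of_row_col_sums {ι κ : Type*} [Fintype ι] [Fintype κ]
    {Λ D V : Matrix ι κ ℝ} {y lam : ι → ℝ} {z a : κ → ℝ}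
    (hrow : ∀ i, ∑ j, Λ i j = lam i) (hcol : ∀ j, ∑ i, Λ i j = a j)
    (hV : ∀ i j, V i j = D i j + y i + z j) :
    ∑ i, ∑ j, Λ i j * V i j
      = ∑ i, ∑ j, Λ i j * D i j + ∑ i, y i * lam i + ∑ j, z j * a j := by
  simp only [hV, mul_add, sum_add_distrib]
  congr 2
  · refine sum_congr rfl fun i _ => ?_
    rw [← hrow, mul_sum]
    exact sum_congr rfl fun j _ => mul_comm _ _
  · rw [sum_comm]
    refine sum_congr rfl fun j _ => ?_
    rw [← hcol, mul_sum]
    exact sum_congr rfl fun i _ => mul_comm _ _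

section

variable {N m : ℕ} {mt : Fin N → ℕ} {D : ∀ t : Fin N, Matrix (Fin m) (Fin (mt t)) ℝ}
  {a : ∀ t : Fin N, Fin (mt t) → ℝ} {u : Fin m → ℝ} {y : Fin N → Fin m → ℝ}
  {z : ∀ t : Fin N, Fin (mt t) → ℝ} {V : ∀ t : Fin N, Matrix (Fin m) (Fin (mt t)) ℝ}
  {lam : Fin m → ℝ} {Lam : ∀ t : Fin N, Matrix (Fin m) (Fin (mt t)) ℝ}

theorem sum_pairing_eq_of_row_col_sums (hrow : ∀ t i, ∑ j, Lam t i j = lam i)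
    (hcol : ∀ t j, ∑ i, Lam t i j = a t j) (hu : ∀ i, ∑ t, y t i = u i)
    (hV : ∀ t i j, V t i j = D t i j + y t i + z t j) :
    ∑ t, ∑ i, ∑ j, Lam t i j * V t i j
      = ∑ t, ∑ i, ∑ j, Lam t i j * D t i j + ∑ i, u i * lam i + ∑ t, ∑ j, z t j * a t j := by
  rw [sum_congr rfl fun t _ => sum_sum_mul_eq_of_row_col_sums (hrow t) (hcol t) (hV t)]
  simp only [sum_add_distrib]
  congr 2
  rw [sum_comm]
  exact sum_congr rfl fun i _ => by rw [← sum_mul, hu]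

theorem neg_sum_pairing_le_dualObj (hfeas : DualFeasible N m mt D u y z V)
    (hlam : lam ∈ simplexSet m) (hLam : ∀ t i j, 0 ≤ Lam t i j)
    (hrow : ∀ t i, ∑ j, Lam t i j = lam i) (hcol : ∀ t j, ∑ i, Lam t i j = a t j) :
    -∑ t, ∑ i, ∑ j, Lam t i j * D t i j ≤ dualObj N m mt a u z := by
  obtain ⟨hu, hV⟩ := hfeas
  have hpairing := sum_pairing_eq_of_row_col_sums hrow hcol hu fun t => (hV t).1
  have hpairing_nonneg : 0 ≤ ∑ t, ∑ i, ∑ j, Lam t i j * V t i j :=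
    sum_nonneg fun t _ => sum_nonneg fun i _ => sum_nonneg fun j _ =>
      mul_nonneg (hLam t i j) ((hV t).2 i j)
  have hmax := sum_mul_le_iSup_of_nonneg_of_sum_eq_one u lam hlam.1 hlam.2
  unfold dualObj
  linarith

theorem DualKKT.dualFeasible (hKKT : DualKKT N m mt D a u V y z lam Lam) :
    DualFeasible N m mt D u y z V :=
  ⟨hKKT.2.2.2.1, fun t => ⟨hKKT.2.2.2.2 t, (hKKT.2.1 t).1⟩⟩

theorem DualKKT.dualObj_eq (hKKT : DualKKT N m mt D a u V y z lam Lam) :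
    dualObj N m mt a u z = -∑ t, ∑ i, ∑ j, Lam t i j * D t i j := by
  obtain ⟨⟨-, hmax⟩, hslack, hsums, hu, hV⟩ := hKKT
  have hpairing := sum_pairing_eq_of_row_col_sums (fun t => (hsums t).1) (fun t => (hsums t).2)
    hu hV
  rw [sum_eq_zero fun t _ => (hslack t).2.2] at hpairing
  unfold dualObj
  linarith

end

theorem stmt_5_general (N m : ℕ)
    (mt : Fin N → ℕ)
    (D : ∀ t : Fin N, Matrix (Fin m) (Fin (mt t)) ℝ)
    (a : ∀ t : Fin N, Fin (mt t) → ℝ)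
    (ustar : Fin m → ℝ) (Vstar : ∀ t : Fin N, Matrix (Fin m) (Fin (mt t)) ℝ)
    (ystar : Fin N → Fin m → ℝ) (zstar : ∀ t : Fin N, Fin (mt t) → ℝ)
    (lamstar : Fin m → ℝ) (Lamstar : ∀ t : Fin N, Matrix (Fin m) (Fin (mt t)) ℝ)
    (hKKT : DualKKT N m mt D a ustar Vstar ystar zstar lamstar Lamstar) :
    DualFeasible N m mt D ustar ystar zstar Vstar ∧
    ∀ (u : Fin m → ℝ) (y : Fin N → Fin m → ℝ)
      (z : ∀ t : Fin N, Fin (mt t) → ℝ)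
      (V : ∀ t : Fin N, Matrix (Fin m) (Fin (mt t)) ℝ),
      DualFeasible N m mt D u y z V →
      dualObj N m mt a ustar zstar ≤ dualObj N m mt a u z := by
  refine ⟨hKKT.dualFeasible, fun u y z V hfeas => ?_⟩
  rw [hKKT.dualObj_eq]
  obtain ⟨⟨hlam, -⟩, hslack, hsums, -⟩ := hKKT
  exact neg_sum_pairing_le_dualObj hfeas hlam (fun t => (hslack t).2.1)
    (fun t => (hsums t).1) (fun t => (hsums t).2)

/-- any solution of the dual KKT system yields an optimal solution
of the dual problem. -/
theorem stmt_5 (N m : ℕ) (hN : 0 < N) (hm : 0 < m)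
    (mt : Fin N → ℕ) (hmt : ∀ t, 0 < mt t)
    (D : ∀ t : Fin N, Matrix (Fin m) (Fin (mt t)) ℝ)
    (a : ∀ t : Fin N, Fin (mt t) → ℝ)
    (ha : ∀ t j, 0 ≤ a t j) (hasum : ∀ t, ∑ j, a t j = 1)
    (ustar : Fin m → ℝ) (Vstar : ∀ t : Fin N, Matrix (Fin m) (Fin (mt t)) ℝ)
    (ystar : Fin N → Fin m → ℝ) (zstar : ∀ t : Fin N, Fin (mt t) → ℝ)
    (lamstar : Fin m → ℝ) (Lamstar : ∀ t : Fin N, Matrix (Fin m) (Fin (mt t)) ℝ)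
    (hKKT : DualKKT N m mt D a ustar Vstar ystar zstar lamstar Lamstar) :
    DualFeasible N m mt D ustar ystar zstar Vstar ∧
    ∀ (u : Fin m → ℝ) (y : Fin N → Fin m → ℝ)
      (z : ∀ t : Fin N, Fin (mt t) → ℝ)
      (V : ∀ t : Fin N, Matrix (Fin m) (Fin (mt t)) ℝ),
      DualFeasible N m mt D u y z V →
      dualObj N m mt a ustar zstar ≤ dualObj N m mt a u z :=
  stmt_5_general N m mt D a ustar Vstar ystar zstar lamstar Lamstar hKKT
end

section
/- Strong duality holds: the minimum value of the primal LP equals the negative of the minimum value of the dual problem. In particular, for any tuple (u*, {V^{(t),*}}, {y^{(t),*}}, {z^{(t),*}}, λ*, {Λ^{(t),*}}) satisfying the dual KKT system, one has ∑_{t=1}^N ⟨D^{(t)}, Λ^{(t),*}⟩ + max_{1≤i≤m} u*_i + ∑_{t=1}^N ⟨z^{(t),*}, a^{(t)}⟩ = 0. -/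
/-- Feasibility for the primal LP. -/
def PrimalFeasible (N m : ℕ) (mt : Fin N → ℕ) (a : ∀ t : Fin N, Fin (mt t) → ℝ)
    (w : Fin m → ℝ) (Pi : ∀ t : Fin N, Matrix (Fin m) (Fin (mt t)) ℝ) : Prop :=
  w ∈ simplexSet m ∧
    ∀ t : Fin N,
      (∀ i j, 0 ≤ Pi t i j) ∧
      (∀ i, ∑ j, Pi t i j = w i) ∧
      (∀ j, ∑ i, Pi t i j = a t j)

/-- The primal objective `∑_t ⟨D^{(t)}, Π^{(t)}⟩`. -/
def primalObj (N m : ℕ) (mt : Fin N → ℕ)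
    (D : ∀ t : Fin N, Matrix (Fin m) (Fin (mt t)) ℝ)
    (Pi : ∀ t : Fin N, Matrix (Fin m) (Fin (mt t)) ℝ) : ℝ :=
  ∑ t, ∑ i, ∑ j, D t i j * Pi t i j

open Finset

section FarkasAux

variable {ι κ : Type*} [Fintype ι] [Fintype κ] [DecidableEq ι]

/-- Cone of nonnegative combinations of `v i`, `i ∈ s`. -/
def coneCoeff (v : ι → κ → ℝ) (s : Finset ι) : Set (κ → ℝ) :=
  {x | ∃ c : ι → ℝ, (∀ i, 0 ≤ c i) ∧ x = ∑ i ∈ s, c i • v i}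

lemma carath (v : ι → κ → ℝ) (s : Finset ι) :
    ∀ x ∈ coneCoeff v s, ∃ t ⊆ s,
      LinearIndependent ℝ (fun i : t => v i) ∧ x ∈ coneCoeff v t := by
  induction s using Finset.strongInduction with
  | _ s ih =>
    rintro x ⟨c, hc, rfl⟩
    by_cases hz : ∃ i ∈ s, c i = 0
    · obtain ⟨i0, hi0, hci0⟩ := hz
      have hx : ∑ i ∈ s, c i • v i = ∑ i ∈ s.erase i0, c i • v i := by
        rw [← Finset.add_sum_erase _ _ hi0, hci0, zero_smul, zero_add]
      obtain ⟨t, hts, hli, hmem⟩ := ih (s.erase i0) (Finset.erase_ssubset hi0) _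
        ⟨c, hc, rfl⟩
      exact ⟨t, hts.trans (Finset.erase_subset _ _), hli, by rw [hx]; exact hmem⟩
    · push_neg at hz
      by_cases hli : LinearIndependent ℝ (fun i : s => v i)
      · exact ⟨s, subset_rfl, hli, c, hc, rfl⟩
      · obtain ⟨g, hgsum, ig, hig⟩ := Fintype.not_linearIndependent_iff.mp hli
        -- build d with a positive entry
        have hkey : ∃ d : ι → ℝ, (∀ i, i ∉ s → d i = 0) ∧
            (∑ i ∈ s, d i • v i) = 0 ∧ ∃ i ∈ s, 0 < d i := by
          have hgs : ∀ g' : ↥s → ℝ, (∑ i : ↥s, g' i • v ↑i) = 0 →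
              (∑ i ∈ s, (fun i => if h : i ∈ s then g' ⟨i, h⟩ else 0) i • v i) = 0 := by
            intro g' hg'
            rw [← Finset.sum_attach s fun i => (if h : i ∈ s then g' ⟨i, h⟩ else 0) • v i]
            simpa [Finset.univ_eq_attach] using hg'
          rcases lt_trichotomy (g ig) 0 with h | h | h
          · refine ⟨fun i => if h : i ∈ s then -g ⟨i, h⟩ else 0, fun i hi => by simp [hi], ?_,
              ig, ig.2, by simp [ig.2, h]⟩
            have := hgs (-g) (by simpa using hgsum)
            simpa using this
          · exact absurd h hig
          · exact ⟨fun i => if h : i ∈ s then g ⟨i, h⟩ else 0, fun i hi => by simp [hi],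
              hgs g hgsum, ig, ig.2, by simp [ig.2, h]⟩
        obtain ⟨d, hdout, hdsum, i1', hi1', hd1'⟩ := hkey
        obtain ⟨i1, hi1mem, hmin⟩ := Finset.exists_min_image
          (s.filter fun i => 0 < d i) (fun i => c i / d i) ⟨i1', by simp [hi1', hd1']⟩
        rw [Finset.mem_filter] at hi1mem
        obtain ⟨hi1s, hdi1⟩ := hi1mem
        set τ := c i1 / d i1 with hτdef
        have hτ : 0 ≤ τ := div_nonneg (hc i1) hdi1.le
        set c' : ι → ℝ := fun i => c i - τ * d i with hc'def
        have hc' : ∀ i, 0 ≤ c' i := by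
          intro i
          by_cases his : i ∈ s
          · by_cases hdi : 0 < d i
            · have := hmin i (Finset.mem_filter.mpr ⟨his, hdi⟩)
              have h2 : τ * d i ≤ c i := by
                rw [div_le_div_iff₀ hdi1 hdi] at this
                calc τ * d i = c i1 / d i1 * d i := rfl
                _ ≤ c i := by
                  rw [div_mul_eq_mul_div, div_le_iff₀ hdi1]
                  linarith [this]
              simp only [hc'def]; linarith
            · push_neg at hdi
              have : τ * d i ≤ 0 := mul_nonpos_of_nonneg_of_nonpos hτ hdi
              simp only [hc'def]; have := hc i; linarith
          · simp only [hc'def, hdout i his, mul_zero, sub_zero]; exact hc i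
        have hsum' : ∑ i ∈ s, c' i • v i = ∑ i ∈ s, c i • v i := by
          simp only [hc'def, sub_smul, Finset.sum_sub_distrib, mul_smul]
          rw [← Finset.smul_sum, hdsum, smul_zero, sub_zero]
        have hc'i1 : c' i1 = 0 := by
          simp only [hc'def, hτdef]
          field_simp
          ring
        have hx : ∑ i ∈ s, c' i • v i = ∑ i ∈ s.erase i1, c' i • v i := by
          rw [← Finset.add_sum_erase _ _ hi1s, hc'i1, zero_smul, zero_add]
        obtain ⟨t, hts, hli', hmem⟩ := ih (s.erase i1) (Finset.erase_ssubset hi1s) _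
          ⟨c', hc', rfl⟩
        refine ⟨t, hts.trans (Finset.erase_subset _ _), hli', ?_⟩
        rw [← hsum', hx]; exact hmem

lemma isClosed_coneCoeff_li (v : ι → κ → ℝ) (s : Finset ι)
    (h : LinearIndependent ℝ (fun i : s => v i)) : IsClosed (coneCoeff v s) := by
  classical
  let L : (↥s → ℝ) →ₗ[ℝ] (κ → ℝ) :=
    { toFun := fun c => ∑ i : ↥s, c i • v ↑i
      map_add' := by intro c1 c2; simp [add_smul, Finset.sum_add_distrib]
      map_smul' := by intro r c; simp [smul_smul, Finset.smul_sum] }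
  have hker : LinearMap.ker L = ⊥ := by
      rw [LinearMap.ker_eq_bot']
      intro c hc0
      have := Fintype.linearIndependent_iff.mp h c hc0
      funext i; exact this i
  have hL : Topology.IsClosedEmbedding L := LinearMap.isClosedEmbedding_of_injective hker
  have himg : coneCoeff v s = L '' {c : ↥s → ℝ | ∀ i, 0 ≤ c i} := by
    ext x
    constructor
    · rintro ⟨c, hc, rfl⟩
      refine ⟨fun i => c ↑i, fun i => hc ↑i, ?_⟩
      show ∑ i : ↥s, c ↑i • v ↑i = _
      rw [Finset.univ_eq_attach, Finset.sum_attach s fun i => c i • v i]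
    · rintro ⟨c, hc, rfl⟩
      refine ⟨fun i => if h : i ∈ s then c ⟨i, h⟩ else 0, fun i => ?_, ?_⟩
      · by_cases h : i ∈ s <;> simp [h, hc _]
      · show _ = ∑ i ∈ s, (if h : i ∈ s then c ⟨i, h⟩ else 0) • v i
        rw [← Finset.sum_attach s fun i => (if h : i ∈ s then c ⟨i, h⟩ else 0) • v i]
        show ∑ i : ↥s, c i • v ↑i = _
        rw [Finset.univ_eq_attach]
        exact Finset.sum_congr rfl fun i _ => by simp [i.2]
  rw [himg]
  refine hL.isClosedMap _ ?_
  have : {c : ↥s → ℝ | ∀ i, 0 ≤ c i} = ⋂ i, {c : ↥s → ℝ | 0 ≤ c i} := by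
    ext c; simp [Set.mem_iInter]
  rw [this]
  exact isClosed_iInter fun i => isClosed_le continuous_const (continuous_apply i)

lemma coneCoeff_subset_univ (v : ι → κ → ℝ) (t : Finset ι) :
    coneCoeff v t ⊆ coneCoeff v univ := by
  rintro x ⟨c, hc, rfl⟩
  refine ⟨fun i => if i ∈ t then c i else 0, fun i => by by_cases h : i ∈ t <;> simp [h, hc _], ?_⟩
  rw [← Finset.sum_subset (Finset.subset_univ t)]
  · exact Finset.sum_congr rfl fun i hi => by simp [hi]
  · intro i _ hi; simp [hi]

lemma isClosed_coneCoeff_univ (v : ι → κ → ℝ) : IsClosed (coneCoeff v (univ : Finset ι)) := by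
  have : coneCoeff v (univ : Finset ι) =
      ⋃ t : {t : Finset ι // LinearIndependent ℝ (fun i : t => v i)}, coneCoeff v ↑t := by
    apply Set.Subset.antisymm
    · intro x hx
      obtain ⟨t, _, hli, hmem⟩ := carath v univ x hx
      exact Set.mem_iUnion.mpr ⟨⟨t, hli⟩, hmem⟩
    · exact Set.iUnion_subset fun t => coneCoeff_subset_univ v ↑t
  rw [this]
  exact isClosed_iUnion_of_finite fun t => isClosed_coneCoeff_li v ↑t t.2

lemma convex_coneCoeff_univ (v : ι → κ → ℝ) : Convex ℝ (coneCoeff v (univ : Finset ι)) := by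
  rintro x ⟨c, hc, rfl⟩ y ⟨c', hc', rfl⟩ p q hp hq hpq
  refine ⟨fun i => p * c i + q * c' i,
    fun i => by have := hc i; have := hc' i; positivity, ?_⟩
  simp only [Finset.smul_sum, ← Finset.sum_add_distrib, smul_smul]
  exact Finset.sum_congr rfl fun i _ => by rw [add_smul]

/-- Farkas lemma. -/
lemma farkas (v : ι → κ → ℝ) (b : κ → ℝ)
    (h : ¬ ∃ x : ι → ℝ, (∀ i, 0 ≤ x i) ∧ ∑ i, x i • v i = b) :
    ∃ y : κ → ℝ, (∀ i, 0 ≤ ∑ k, v i k * y k) ∧ ∑ k, b k * y k < 0 := by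
  classical
  have hb : b ∉ coneCoeff v univ := by
    rintro ⟨c, hc, hcb⟩
    exact h ⟨c, hc, hcb.symm⟩
  obtain ⟨f, u, hfb, hfC⟩ :=
    geometric_hahn_banach_point_closed (convex_coneCoeff_univ v) (isClosed_coneCoeff_univ v) hb
  have h0 : (0 : κ → ℝ) ∈ coneCoeff v univ := ⟨0, fun i => le_refl 0, by simp⟩
  have hu0 : u < 0 := by simpa using hfC 0 h0
  have hrep : ∀ w : κ → ℝ, f w = ∑ k, w k * f (fun j => if k = j then 1 else 0) := by
    intro w
    conv_lhs => rw [pi_eq_sum_univ w]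
    rw [map_sum]
    exact Finset.sum_congr rfl fun k _ => by rw [map_smul]; simp [smul_eq_mul]
  refine ⟨fun k => f (fun j => if k = j then 1 else 0), fun i => ?_, ?_⟩
  · by_contra hneg
    push_neg at hneg
    have hfv : f (v i) < 0 := by rw [hrep (v i)]; exact hneg
    have htpos : 0 < u / f (v i) := div_pos_of_neg_of_neg hu0 hfv
    have hmem : (u / f (v i)) • v i ∈ coneCoeff v univ := by
      refine ⟨fun j => if j = i then u / f (v i) else 0,
        fun j => by by_cases h : j = i <;> simp [h, htpos.le], ?_⟩
      simp [ite_smul, Finset.sum_ite_eq']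
    have hlt := hfC _ hmem
    rw [map_smul, smul_eq_mul, div_mul_cancel₀ u (ne_of_lt hfv)] at hlt
    exact lt_irrefl u hlt
  · have : f b < 0 := hfb.trans hu0
    rwa [hrep b] at this

end FarkasAux

section LP

open Finset

variable {ι κ : Type*} [Fintype ι] [Fintype κ] [DecidableEq ι] [DecidableEq κ]

lemma lp_dual_bound (A : κ → ι → ℝ) (c : ι → ℝ) (b : κ → ℝ)
    (x0 : ι → ℝ) (hx0 : ∀ i, 0 ≤ x0 i) (hx0A : ∀ k, ∑ i, A k i * x0 i = b k)
    (hbdd : BddBelow {r : ℝ | ∃ x : ι → ℝ, (∀ i, 0 ≤ x i) ∧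
      (∀ k, ∑ i, A k i * x i = b k) ∧ r = ∑ i, c i * x i})
    {ε : ℝ} (hε : 0 < ε) :
    ∃ y : κ → ℝ, (∀ i, 0 ≤ c i + ∑ k, A k i * y k) ∧
      ∑ k, b k * y k < ε - sInf {r : ℝ | ∃ x : ι → ℝ, (∀ i, 0 ≤ x i) ∧
        (∀ k, ∑ i, A k i * x i = b k) ∧ r = ∑ i, c i * x i} := by
  classical
  set P : Set ℝ := {r : ℝ | ∃ x : ι → ℝ, (∀ i, 0 ≤ x i) ∧
      (∀ k, ∑ i, A k i * x i = b k) ∧ r = ∑ i, c i * x i} with hP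
  set p : ℝ := sInf P with hp
  -- augmented system
  set v : (ι ⊕ Unit) → (κ ⊕ Unit) → ℝ := fun i' k' =>
    match i', k' with
    | .inl i, .inl k => A k i
    | .inl i, .inr _ => c i
    | .inr _, .inl _ => 0
    | .inr _, .inr _ => 1 with hv
  set b' : (κ ⊕ Unit) → ℝ := fun k' =>
    match k' with
    | .inl k => b k
    | .inr _ => p - ε with hb'
  have hinfeas : ¬ ∃ x : (ι ⊕ Unit) → ℝ, (∀ i, 0 ≤ x i) ∧ ∑ i, x i • v i = b' := by
    rintro ⟨x, hx, hsum⟩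
    have heval : ∀ k' : κ ⊕ Unit, ∑ i', x i' * v i' k' = b' k' := by
      intro k'
      have := congrFun hsum k'
      simpa [Finset.sum_apply] using this
    have hPk : ∀ k, ∑ i, A k i * (x (Sum.inl i)) = b k := by
      intro k
      have := heval (Sum.inl k)
      simp [hv, hb', Fintype.sum_sum_type] at this
      rw [← this]
      exact Finset.sum_congr rfl fun i _ => mul_comm _ _
    have hobj : (∑ i, c i * x (Sum.inl i)) + x (Sum.inr ()) = p - ε := by
      have := heval (Sum.inr ())
      simp [hv, hb', Fintype.sum_sum_type] at this
      rw [← this]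
      congr 1
      exact Finset.sum_congr rfl fun i _ => mul_comm _ _
    have hmem : (∑ i, c i * x (Sum.inl i)) ∈ P := ⟨fun i => x (Sum.inl i),
      fun i => hx _, hPk, rfl⟩
    have h1 : p ≤ ∑ i, c i * x (Sum.inl i) := csInf_le hbdd hmem
    have h2 : 0 ≤ x (Sum.inr ()) := hx _
    linarith
  obtain ⟨y', hy1, hy2⟩ := farkas v b' hinfeas
  set τ : ℝ := y' (Sum.inr ()) with hτ
  have hτ0 : 0 ≤ τ := by
    have := hy1 (Sum.inr ())
    simpa [hv, Fintype.sum_sum_type] using this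
  have hcol : ∀ i, 0 ≤ (∑ k, A k i * y' (Sum.inl k)) + c i * τ := by
    intro i
    have := hy1 (Sum.inl i)
    simp [hv, Fintype.sum_sum_type] at this
    rw [show ∑ k, A k i * y' (Sum.inl k) = ∑ k, y' (Sum.inl k) * A k i from
      Finset.sum_congr rfl fun k _ => mul_comm _ _]
    simpa [mul_comm] using this
  have hbrow : (∑ k, b k * y' (Sum.inl k)) + (p - ε) * τ < 0 := by
    have := hy2
    simpa [hv, hb', Fintype.sum_sum_type] using this
  have hτpos : 0 < τ := by
    rcases eq_or_lt_of_le hτ0 with h | h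
    · exfalso
      have hbneg : ∑ k, b k * y' (Sum.inl k) < 0 := by rw [← h] at hbrow; simpa using hbrow
      have hnn : 0 ≤ ∑ k, b k * y' (Sum.inl k) := by
        have expand : ∀ k, b k * y' (Sum.inl k) = ∑ i, x0 i * (A k i * y' (Sum.inl k)) := by
          intro k
          rw [← hx0A k, Finset.sum_mul]
          exact Finset.sum_congr rfl fun i _ => by ring
        have : ∑ k, b k * y' (Sum.inl k)
            = ∑ i, x0 i * (∑ k, A k i * y' (Sum.inl k)) := by
          calc ∑ k, b k * y' (Sum.inl k)
              = ∑ k, ∑ i, x0 i * (A k i * y' (Sum.inl k)) :=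
                Finset.sum_congr rfl fun k _ => expand k
            _ = ∑ i, x0 i * (∑ k, A k i * y' (Sum.inl k)) := by
                rw [Finset.sum_comm]
                exact Finset.sum_congr rfl fun i _ => (Finset.mul_sum _ _ _).symm
        rw [this]
        refine Finset.sum_nonneg fun i _ => mul_nonneg (hx0 i) ?_
        have := hcol i
        rw [← h] at this
        simpa using this
      linarith
    · exact h
  refine ⟨fun k => y' (Sum.inl k) / τ, fun i => ?_, ?_⟩
  · have h1 : 0 ≤ ((∑ k, A k i * y' (Sum.inl k)) + c i * τ) / τ :=
      div_nonneg (hcol i) hτ0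
    rw [add_div] at h1
    rw [show ∑ k, A k i * (y' (Sum.inl k) / τ) = (∑ k, A k i * y' (Sum.inl k)) / τ by
      rw [Finset.sum_div]; exact Finset.sum_congr rfl fun k _ => by ring]
    rw [mul_div_assoc, div_self (ne_of_gt hτpos), mul_one] at h1
    linarith
  · rw [show ∑ k, b k * (y' (Sum.inl k) / τ) = (∑ k, b k * y' (Sum.inl k)) / τ by
      rw [Finset.sum_div]; exact Finset.sum_congr rfl fun k _ => by ring]
    rw [div_lt_iff₀ hτpos]
    nlinarith [hbrow]

end LP

section App

open Finset

variable {N m : ℕ} {mt : Fin N → ℕ}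

/-- Constraint matrix of the primal LP in standard form. -/
def Amat (N m : ℕ) (mt : Fin N → ℕ) :
    (((Fin N × Fin m) ⊕ ((t : Fin N) × Fin (mt t))) ⊕ Unit) →
      (Fin m ⊕ ((t : Fin N) × (Fin m × Fin (mt t)))) → ℝ
  | .inl (.inl q), .inl i => if i = q.2 then -1 else 0
  | .inl (.inl q), .inr p => if (p.1, p.2.1) = q then 1 else 0
  | .inl (.inr _), .inl _ => 0
  | .inl (.inr q), .inr p => if (⟨p.1, p.2.2⟩ : (t : Fin N) × Fin (mt t)) = q then 1 else 0
  | .inr _, .inl _ => 1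
  | .inr _, .inr _ => 0

lemma sigma_sum_eq (f : ((t : Fin N) × (Fin m × Fin (mt t))) → ℝ) :
    ∑ p : (t : Fin N) × (Fin m × Fin (mt t)), f p
      = ∑ t, ∑ i, ∑ j, f ⟨t, (i, j)⟩ := by
  rw [show (∑ t, ∑ i, ∑ j, f ⟨t, (i, j)⟩)
      = ∑ t, ∑ q : Fin m × Fin (mt t), f ⟨t, q⟩ from
    Finset.sum_congr rfl fun t _ =>
      (Fintype.sum_prod_type (fun q : Fin m × Fin (mt t) => f ⟨t, q⟩)).symm]
  rw [← Finset.sum_sigma]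
  rfl

lemma sigma2_sum_eq (f : ((t : Fin N) × Fin (mt t)) → ℝ) :
    ∑ p : (t : Fin N) × Fin (mt t), f p = ∑ t, ∑ j, f ⟨t, j⟩ := by
  rw [← Finset.sum_sigma]
  rfl

lemma rowE1 (t₀ : Fin N) (i₀ : Fin m)
    (x : (Fin m ⊕ ((t : Fin N) × (Fin m × Fin (mt t)))) → ℝ) :
    ∑ i, Amat N m mt (.inl (.inl (t₀, i₀))) i * x i
      = (∑ j, x (.inr ⟨t₀, (i₀, j)⟩)) - x (.inl i₀) := by
  rw [Fintype.sum_sum_type]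
  have h1 : ∑ i : Fin m, Amat N m mt (.inl (.inl (t₀, i₀))) (.inl i) * x (.inl i)
      = -x (.inl i₀) := by
    simp [Amat, ite_mul]
  have h2 : ∑ p : (t : Fin N) × (Fin m × Fin (mt t)),
      Amat N m mt (.inl (.inl (t₀, i₀))) (.inr p) * x (.inr p)
      = ∑ j, x (.inr ⟨t₀, (i₀, j)⟩) := by
    rw [sigma_sum_eq]
    rw [Finset.sum_eq_single t₀]
    · rw [Finset.sum_eq_single i₀]
      · simp [Amat]
      · intro i _ hi
        simp [Amat, Prod.ext_iff, hi]
      · simp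
    · intro t _ ht
      simp [Amat, Prod.ext_iff, ht]
    · simp
  rw [h1, h2]; ring

lemma rowE2 (t₀ : Fin N) (j₀ : Fin (mt t₀))
    (x : (Fin m ⊕ ((t : Fin N) × (Fin m × Fin (mt t)))) → ℝ) :
    ∑ i, Amat N m mt (.inl (.inr ⟨t₀, j₀⟩)) i * x i
      = ∑ i, x (.inr ⟨t₀, (i, j₀)⟩) := by
  rw [Fintype.sum_sum_type]
  have h1 : ∑ i : Fin m, Amat N m mt (.inl (.inr ⟨t₀, j₀⟩)) (.inl i) * x (.inl i) = 0 := by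
    simp [Amat]
  have h2 : ∑ p : (t : Fin N) × (Fin m × Fin (mt t)),
      Amat N m mt (.inl (.inr ⟨t₀, j₀⟩)) (.inr p) * x (.inr p)
      = ∑ i, x (.inr ⟨t₀, (i, j₀)⟩) := by
    rw [sigma_sum_eq]
    rw [Finset.sum_eq_single t₀]
    · refine Finset.sum_congr rfl fun i _ => ?_
      rw [Finset.sum_eq_single j₀]
      · simp [Amat]
      · intro j _ hj
        simp [Amat, Sigma.mk.inj_iff, hj]
      · simp
    · intro t _ ht
      simp [Amat, Sigma.mk.inj_iff, ht]
    · simp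
  rw [h1, h2]; ring

lemma rowE3 (x : (Fin m ⊕ ((t : Fin N) × (Fin m × Fin (mt t)))) → ℝ) :
    ∑ i, Amat N m mt (.inr ()) i * x i = ∑ i, x (.inl i) := by
  rw [Fintype.sum_sum_type]
  simp [Amat]

lemma colW (i₀ : Fin m)
    (y : (((Fin N × Fin m) ⊕ ((t : Fin N) × Fin (mt t))) ⊕ Unit) → ℝ) :
    ∑ k, Amat N m mt k (.inl i₀) * y k
      = -(∑ t, y (.inl (.inl (t, i₀)))) + y (.inr ()) := by
  rw [Fintype.sum_sum_type, Fintype.sum_sum_type, Fintype.sum_prod_type]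
  have h1 : ∑ t : Fin N, ∑ i : Fin m,
      Amat N m mt (.inl (.inl (t, i))) (.inl i₀) * y (.inl (.inl (t, i)))
      = ∑ t, -y (.inl (.inl (t, i₀))) := by
    refine Finset.sum_congr rfl fun t _ => ?_
    simp [Amat, ite_mul]
  have h2 : ∑ p : (t : Fin N) × Fin (mt t),
      Amat N m mt (.inl (.inr p)) (.inl i₀) * y (.inl (.inr p)) = 0 := by
    simp [Amat]
  rw [h1, h2]
  simp [Amat]

lemma colPi (t₀ : Fin N) (i₀ : Fin m) (j₀ : Fin (mt t₀))
    (y : (((Fin N × Fin m) ⊕ ((t : Fin N) × Fin (mt t))) ⊕ Unit) → ℝ) :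
    ∑ k, Amat N m mt k (.inr ⟨t₀, (i₀, j₀)⟩) * y k
      = y (.inl (.inl (t₀, i₀))) + y (.inl (.inr ⟨t₀, j₀⟩)) := by
  rw [Fintype.sum_sum_type, Fintype.sum_sum_type, Fintype.sum_prod_type]
  have h1 : ∑ t : Fin N, ∑ i : Fin m,
      Amat N m mt (.inl (.inl (t, i))) (.inr ⟨t₀, (i₀, j₀)⟩) * y (.inl (.inl (t, i)))
      = y (.inl (.inl (t₀, i₀))) := by
    rw [Finset.sum_eq_single t₀]
    · rw [Finset.sum_eq_single i₀]
      · simp [Amat]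
      · intro i _ hi
        simp [Amat, Prod.ext_iff, Ne.symm hi]
      · simp
    · intro t _ ht
      simp [Amat, Prod.ext_iff, Ne.symm ht]
    · simp
  have h2 : ∑ p : (t : Fin N) × Fin (mt t),
      Amat N m mt (.inl (.inr p)) (.inr ⟨t₀, (i₀, j₀)⟩) * y (.inl (.inr p))
      = y (.inl (.inr ⟨t₀, j₀⟩)) := by
    rw [sigma2_sum_eq (fun p => Amat N m mt (.inl (.inr p)) (.inr ⟨t₀, (i₀, j₀)⟩)
      * y (.inl (.inr p)))]
    rw [Finset.sum_eq_single t₀]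
    · rw [Finset.sum_eq_single j₀]
      · simp [Amat]
      · intro j _ hj
        simp [Amat, Sigma.mk.inj_iff, Ne.symm hj]
      · simp
    · intro t _ ht
      simp [Amat, Sigma.mk.inj_iff, Ne.symm ht]
    · simp
  rw [h1, h2]
  simp [Amat]

/-- Right-hand side of the primal LP in standard form. -/
def bvec (N m : ℕ) (mt : Fin N → ℕ) (a : ∀ t : Fin N, Fin (mt t) → ℝ) :
    (((Fin N × Fin m) ⊕ ((t : Fin N) × Fin (mt t))) ⊕ Unit) → ℝ
  | .inl (.inl _) => 0
  | .inl (.inr q) => a q.1 q.2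
  | .inr _ => 1

/-- Cost vector of the primal LP in standard form. -/
def cvec (N m : ℕ) (mt : Fin N → ℕ) (D : ∀ t : Fin N, Matrix (Fin m) (Fin (mt t)) ℝ) :
    (Fin m ⊕ ((t : Fin N) × (Fin m × Fin (mt t)))) → ℝ
  | .inl _ => 0
  | .inr p => D p.1 p.2.1 p.2.2

lemma bdot (a : ∀ t : Fin N, Fin (mt t) → ℝ)
    (y : (((Fin N × Fin m) ⊕ ((t : Fin N) × Fin (mt t))) ⊕ Unit) → ℝ) :
    ∑ k, bvec N m mt a k * y k
      = (∑ t, ∑ j, a t j * y (.inl (.inr ⟨t, j⟩))) + y (.inr ()) := by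
  rw [Fintype.sum_sum_type, Fintype.sum_sum_type]
  have h2 : ∑ p : (t : Fin N) × Fin (mt t),
      bvec N m mt a (.inl (.inr p)) * y (.inl (.inr p))
      = ∑ t, ∑ j, a t j * y (.inl (.inr ⟨t, j⟩)) := by
    rw [sigma2_sum_eq (fun p => bvec N m mt a (.inl (.inr p)) * y (.inl (.inr p)))]
    rfl
  rw [h2]
  simp [bvec]

lemma cdot (D : ∀ t : Fin N, Matrix (Fin m) (Fin (mt t)) ℝ)
    (x : (Fin m ⊕ ((t : Fin N) × (Fin m × Fin (mt t)))) → ℝ) :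
    ∑ i, cvec N m mt D i * x i
      = ∑ t, ∑ i, ∑ j, D t i j * x (.inr ⟨t, (i, j)⟩) := by
  rw [Fintype.sum_sum_type]
  have h2 : ∑ p : (t : Fin N) × (Fin m × Fin (mt t)),
      cvec N m mt D (.inr p) * x (.inr p)
      = ∑ t, ∑ i, ∑ j, D t i j * x (.inr ⟨t, (i, j)⟩) := by
    rw [sigma_sum_eq (fun p => cvec N m mt D (.inr p) * x (.inr p))]
    rfl
  rw [h2]
  simp [cvec]

end App

section Main

open Finset

variable {N m : ℕ} {mt : Fin N → ℕ}

lemma weak_duality (hm : 0 < m)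
    (D : ∀ t : Fin N, Matrix (Fin m) (Fin (mt t)) ℝ)
    (a : ∀ t : Fin N, Fin (mt t) → ℝ)
    (w : Fin m → ℝ) (Pi : ∀ t : Fin N, Matrix (Fin m) (Fin (mt t)) ℝ)
    (u : Fin m → ℝ) (y : Fin N → Fin m → ℝ) (z : ∀ t : Fin N, Fin (mt t) → ℝ)
    (V : ∀ t : Fin N, Matrix (Fin m) (Fin (mt t)) ℝ)
    (hP : PrimalFeasible N m mt a w Pi) (hD : DualFeasible N m mt D u y z V) :
    -(dualObj N m mt a u z) ≤ primalObj N m mt D Pi := by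
  obtain ⟨⟨hw0, hw1⟩, hPt⟩ := hP
  obtain ⟨hyu, hDt⟩ := hD
  have key : primalObj N m mt D Pi
      = (∑ t, ∑ i, ∑ j, V t i j * Pi t i j) - (∑ i, u i * w i)
        - ∑ t, ∑ j, z t j * a t j := by
    have hterm : ∀ t, ∑ i, ∑ j, D t i j * Pi t i j
        = (∑ i, ∑ j, V t i j * Pi t i j) - (∑ i, y t i * w i)
          - ∑ j, z t j * a t j := by
      intro t
      have h1 : ∑ i, ∑ j, D t i j * Pi t i j
          = ∑ i, ∑ j, (V t i j * Pi t i j - y t i * Pi t i j - z t j * Pi t i j) := by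
        refine Finset.sum_congr rfl fun i _ => Finset.sum_congr rfl fun j _ => ?_
        rw [(hDt t).1 i j]; ring
      rw [h1]
      have h2 : ∀ i, ∑ j, (V t i j * Pi t i j - y t i * Pi t i j - z t j * Pi t i j)
          = (∑ j, V t i j * Pi t i j) - y t i * w i - ∑ j, z t j * Pi t i j := by
        intro i
        rw [Finset.sum_sub_distrib, Finset.sum_sub_distrib, ← Finset.mul_sum,
          (hPt t).2.1 i]
      rw [Finset.sum_congr rfl fun i _ => h2 i]
      rw [Finset.sum_sub_distrib, Finset.sum_sub_distrib]
      congr 1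
      have h3 : ∑ i, ∑ j, z t j * Pi t i j = ∑ j, z t j * a t j := by
        rw [Finset.sum_comm]
        refine Finset.sum_congr rfl fun j _ => ?_
        rw [← Finset.mul_sum, (hPt t).2.2 j]
      rw [h3]
    have : primalObj N m mt D Pi
        = (∑ t, ∑ i, ∑ j, V t i j * Pi t i j) - (∑ t, ∑ i, y t i * w i)
          - ∑ t, ∑ j, z t j * a t j := by
      unfold primalObj
      rw [Finset.sum_congr rfl fun t _ => hterm t, Finset.sum_sub_distrib,
        Finset.sum_sub_distrib]
    rw [this]
    congr 2
    rw [Finset.sum_comm]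
    refine Finset.sum_congr rfl fun i _ => ?_
    rw [← hyu i, Finset.sum_mul]
  have hVP : 0 ≤ ∑ t, ∑ i, ∑ j, V t i j * Pi t i j :=
    Finset.sum_nonneg fun t _ => Finset.sum_nonneg fun i _ => Finset.sum_nonneg fun j _ =>
      mul_nonneg ((hDt t).2 i j) ((hPt t).1 i j)
  have huw : ∑ i, u i * w i ≤ ⨆ i, u i := by
    have hne : Nonempty (Fin m) := ⟨⟨0, hm⟩⟩
    calc ∑ i, u i * w i ≤ ∑ i, (⨆ i, u i) * w i := by
          refine Finset.sum_le_sum fun i _ => ?_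
          exact mul_le_mul_of_nonneg_right
            (le_ciSup (Set.Finite.bddAbove (Set.finite_range u)) i) (hw0 i)
      _ = ⨆ i, u i := by rw [← Finset.mul_sum, hw1, mul_one]
  unfold dualObj
  rw [key]
  linarith

lemma primal_nonempty (hm : 0 < m)
    (a : ∀ t : Fin N, Fin (mt t) → ℝ)
    (ha : ∀ t j, 0 ≤ a t j) (hasum : ∀ t, ∑ j, a t j = 1) :
    PrimalFeasible N m mt a (fun _ => (m : ℝ)⁻¹)
      (fun t i j => (m : ℝ)⁻¹ * a t j) := by
  have hmR : (0 : ℝ) < m := by exact_mod_cast hm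
  refine ⟨⟨fun i => by positivity, ?_⟩, fun t => ⟨fun i j => mul_nonneg (by positivity) (ha t j), fun i => ?_, fun j => ?_⟩⟩
  · rw [Finset.sum_const, Finset.card_univ, Fintype.card_fin]
    rw [nsmul_eq_mul, mul_inv_cancel₀ (ne_of_gt hmR)]
  · rw [← Finset.mul_sum, hasum t, mul_one]
  · rw [Finset.sum_const, Finset.card_univ, Fintype.card_fin]
    rw [nsmul_eq_mul, ← mul_assoc, mul_inv_cancel₀ (ne_of_gt hmR), one_mul]

lemma dual_nonempty
    (D : ∀ t : Fin N, Matrix (Fin m) (Fin (mt t)) ℝ) :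
    DualFeasible N m mt D (fun i => ∑ t, ∑ j, |D t i j|)
      (fun t i => ∑ j, |D t i j|) (fun t _ => 0)
      (fun t i j => D t i j + (∑ j, |D t i j|) + 0) := by
  refine ⟨fun i => rfl, fun t => ⟨fun i j => rfl, fun i j => ?_⟩⟩
  have h1 : |D t i j| ≤ ∑ j', |D t i j'| :=
    Finset.single_le_sum (f := fun j' => |D t i j'|) (fun j' _ => abs_nonneg _)
      (Finset.mem_univ j)
  have h2 : -|D t i j| ≤ D t i j := neg_abs_le _
  show 0 ≤ D t i j + (∑ j', |D t i j'|) + 0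
  linarith

end Main

section SetEq

open Finset

variable {N m : ℕ} {mt : Fin N → ℕ}

lemma encode_feasible (a : ∀ t : Fin N, Fin (mt t) → ℝ)
    (w : Fin m → ℝ) (Pi : ∀ t : Fin N, Matrix (Fin m) (Fin (mt t)) ℝ)
    (h : PrimalFeasible N m mt a w Pi) :
    (∀ i', 0 ≤ Sum.elim w (fun p : (t : Fin N) × (Fin m × Fin (mt t)) =>
        Pi p.1 p.2.1 p.2.2) i') ∧
      (∀ k, ∑ i, Amat N m mt k i * Sum.elim w (fun p : (t : Fin N) × (Fin m × Fin (mt t)) =>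
        Pi p.1 p.2.1 p.2.2) i = bvec N m mt a k) := by
  obtain ⟨⟨hw0, hw1⟩, hPt⟩ := h
  constructor
  · rintro (i | p)
    exacts [hw0 i, (hPt p.1).1 p.2.1 p.2.2]
  · rintro ((⟨t, i⟩ | ⟨t, j⟩) | u)
    · rw [rowE1]
      simp only [Sum.elim_inl, Sum.elim_inr, bvec]
      rw [(hPt t).2.1 i]
      ring
    · rw [rowE2]
      simp only [Sum.elim_inr, bvec]
      exact (hPt t).2.2 j
    · rw [rowE3]
      simpa [bvec] using hw1

lemma encode_obj (D : ∀ t : Fin N, Matrix (Fin m) (Fin (mt t)) ℝ)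
    (w : Fin m → ℝ) (Pi : ∀ t : Fin N, Matrix (Fin m) (Fin (mt t)) ℝ) :
    ∑ i, cvec N m mt D i * Sum.elim w (fun p : (t : Fin N) × (Fin m × Fin (mt t)) =>
        Pi p.1 p.2.1 p.2.2) i = primalObj N m mt D Pi := by
  rw [cdot]
  rfl

lemma primal_set_eq (D : ∀ t : Fin N, Matrix (Fin m) (Fin (mt t)) ℝ)
    (a : ∀ t : Fin N, Fin (mt t) → ℝ) :
    {r : ℝ | ∃ x : (Fin m ⊕ ((t : Fin N) × (Fin m × Fin (mt t)))) → ℝ,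
        (∀ i, 0 ≤ x i) ∧ (∀ k, ∑ i, Amat N m mt k i * x i = bvec N m mt a k) ∧
        r = ∑ i, cvec N m mt D i * x i}
      = {r : ℝ | ∃ (w : Fin m → ℝ) (Pi : ∀ t : Fin N, Matrix (Fin m) (Fin (mt t)) ℝ),
          PrimalFeasible N m mt a w Pi ∧ r = primalObj N m mt D Pi} := by
  ext r
  constructor
  · rintro ⟨x, hx, hk, rfl⟩
    refine ⟨fun i => x (.inl i), fun t i j => x (.inr ⟨t, (i, j)⟩),
      ⟨⟨fun i => hx _, ?_⟩, fun t => ⟨fun i j => hx _, fun i => ?_, fun j => ?_⟩⟩, ?_⟩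
    · have := hk (.inr ())
      rw [rowE3] at this
      simpa [bvec] using this
    · have := hk (.inl (.inl (t, i)))
      rw [rowE1] at this
      simp only [bvec] at this
      linarith
    · have := hk (.inl (.inr ⟨t, j⟩))
      rw [rowE2] at this
      simpa [bvec] using this
    · rw [cdot]
      rfl
  · rintro ⟨w, Pi, h, rfl⟩
    obtain ⟨h1, h2⟩ := encode_feasible a w Pi h
    exact ⟨_, h1, h2, (encode_obj D w Pi).symm⟩

end SetEq

section KKT

open Finset

variable {N m : ℕ} {mt : Fin N → ℕ}

lemma kkt_zero_gap
    (D : ∀ t : Fin N, Matrix (Fin m) (Fin (mt t)) ℝ)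
    (a : ∀ t : Fin N, Fin (mt t) → ℝ)
    (ustar : Fin m → ℝ) (Vstar : ∀ t : Fin N, Matrix (Fin m) (Fin (mt t)) ℝ)
    (ystar : Fin N → Fin m → ℝ) (zstar : ∀ t : Fin N, Fin (mt t) → ℝ)
    (lamstar : Fin m → ℝ) (Lamstar : ∀ t : Fin N, Matrix (Fin m) (Fin (mt t)) ℝ)
    (hK : DualKKT N m mt D a ustar Vstar ystar zstar lamstar Lamstar) :
    primalObj N m mt D Lamstar + dualObj N m mt a ustar zstar = 0 := by
  obtain ⟨⟨_, hul⟩, hcomp, hmarg, hsumy, hV⟩ := hK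
  have h0 : ∑ t, ∑ i, ∑ j, Lamstar t i j * Vstar t i j = 0 :=
    Finset.sum_eq_zero fun t _ => (hcomp t).2.2
  have hexp : ∀ t, ∑ i, ∑ j, Lamstar t i j * Vstar t i j
      = (∑ i, ∑ j, D t i j * Lamstar t i j)
        + ((∑ i, ystar t i * lamstar i) + ∑ j, zstar t j * a t j) := by
    intro t
    have e1 : ∑ i, ∑ j, Lamstar t i j * Vstar t i j
        = ∑ i, ∑ j, (D t i j * Lamstar t i j
            + (ystar t i * Lamstar t i j + zstar t j * Lamstar t i j)) := by
      refine Finset.sum_congr rfl fun i _ => Finset.sum_congr rfl fun j _ => ?_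
      rw [hV t i j]; ring
    rw [e1]
    rw [Finset.sum_congr rfl fun i (_ : i ∈ univ) => Finset.sum_add_distrib
      (f := fun j => D t i j * Lamstar t i j)
      (g := fun j => ystar t i * Lamstar t i j + zstar t j * Lamstar t i j)]
    rw [Finset.sum_add_distrib]
    congr 1
    rw [Finset.sum_congr rfl fun i (_ : i ∈ univ) => Finset.sum_add_distrib
      (f := fun j => ystar t i * Lamstar t i j)
      (g := fun j => zstar t j * Lamstar t i j)]
    rw [Finset.sum_add_distrib]
    congr 1
    · refine Finset.sum_congr rfl fun i _ => ?_
      rw [← Finset.mul_sum, (hmarg t).1 i]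
    · rw [Finset.sum_comm]
      refine Finset.sum_congr rfl fun j _ => ?_
      rw [show ∑ i, zstar t j * Lamstar t i j = zstar t j * ∑ i, Lamstar t i j from
        (Finset.mul_sum _ _ _).symm, (hmarg t).2 j]
  have htot : 0 = primalObj N m mt D Lamstar
      + ((∑ t, ∑ i, ystar t i * lamstar i) + ∑ t, ∑ j, zstar t j * a t j) := by
    rw [← h0, Finset.sum_congr rfl fun t (_ : t ∈ univ) => hexp t]
    unfold primalObj
    rw [Finset.sum_add_distrib, Finset.sum_add_distrib]
  have hyl : ∑ t, ∑ i, ystar t i * lamstar i = ⨆ i, ustar i := by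
    rw [← hul, Finset.sum_comm]
    refine Finset.sum_congr rfl fun i _ => ?_
    rw [← hsumy i, Finset.sum_mul]
  rw [hyl] at htot
  unfold dualObj
  linarith

end KKT

/-- strong duality: the minimum value of the primal LP equals the
negative of the minimum value of the dual problem; in particular the primal and
dual objective values of any dual KKT solution sum to zero. -/
theorem stmt_7 (N m : ℕ) (hN : 0 < N) (hm : 0 < m)
    (mt : Fin N → ℕ) (hmt : ∀ t, 0 < mt t)
    (D : ∀ t : Fin N, Matrix (Fin m) (Fin (mt t)) ℝ)
    (a : ∀ t : Fin N, Fin (mt t) → ℝ)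
    (ha : ∀ t j, 0 ≤ a t j) (hasum : ∀ t, ∑ j, a t j = 1) :
    (sInf {r : ℝ | ∃ (w : Fin m → ℝ) (Pi : ∀ t : Fin N, Matrix (Fin m) (Fin (mt t)) ℝ),
        PrimalFeasible N m mt a w Pi ∧ r = primalObj N m mt D Pi}
      = - sInf {r : ℝ | ∃ (u : Fin m → ℝ) (y : Fin N → Fin m → ℝ)
          (z : ∀ t : Fin N, Fin (mt t) → ℝ)
          (V : ∀ t : Fin N, Matrix (Fin m) (Fin (mt t)) ℝ),
          DualFeasible N m mt D u y z V ∧ r = dualObj N m mt a u z}) ∧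
    ∀ (ustar : Fin m → ℝ) (Vstar : ∀ t : Fin N, Matrix (Fin m) (Fin (mt t)) ℝ)
      (ystar : Fin N → Fin m → ℝ) (zstar : ∀ t : Fin N, Fin (mt t) → ℝ)
      (lamstar : Fin m → ℝ) (Lamstar : ∀ t : Fin N, Matrix (Fin m) (Fin (mt t)) ℝ),
      DualKKT N m mt D a ustar Vstar ystar zstar lamstar Lamstar →
      primalObj N m mt D Lamstar + dualObj N m mt a ustar zstar = 0 := by
  classical
  set Pset : Set ℝ := {r : ℝ | ∃ (w : Fin m → ℝ)
      (Pi : ∀ t : Fin N, Matrix (Fin m) (Fin (mt t)) ℝ),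
      PrimalFeasible N m mt a w Pi ∧ r = primalObj N m mt D Pi} with hPsetdef
  set Dset : Set ℝ := {r : ℝ | ∃ (u : Fin m → ℝ) (y : Fin N → Fin m → ℝ)
      (z : ∀ t : Fin N, Fin (mt t) → ℝ)
      (V : ∀ t : Fin N, Matrix (Fin m) (Fin (mt t)) ℝ),
      DualFeasible N m mt D u y z V ∧ r = dualObj N m mt a u z} with hDsetdef
  have hPne : Pset.Nonempty :=
    ⟨_, _, _, primal_nonempty hm a ha hasum, rfl⟩
  have hDne : Dset.Nonempty := ⟨_, _, _, _, _, dual_nonempty D, rfl⟩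
  have hweak : ∀ p ∈ Pset, ∀ d ∈ Dset, -d ≤ p := by
    rintro p ⟨w, Pi, hPf, rfl⟩ d ⟨u, y, z, V, hDf, rfl⟩
    exact weak_duality hm D a w Pi u y z V hPf hDf
  obtain ⟨p0, hp0⟩ := id hPne
  obtain ⟨d0, hd0⟩ := id hDne
  have hDbdd : BddBelow Dset := ⟨-p0, fun d hd => by
    have := hweak p0 hp0 d hd; linarith⟩
  have hPbdd : BddBelow Pset := ⟨-d0, fun p hp => by
    have := hweak p hp d0 hd0; linarith⟩
  constructor
  · apply le_antisymm
    · have key : sInf Dset ≤ -sInf Pset := by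
        refine le_of_forall_pos_le_add fun ε hε => ?_
        obtain ⟨hx01, hx02⟩ := encode_feasible a _ _ (primal_nonempty hm a ha hasum)
        obtain ⟨y, hy1, hy2⟩ := lp_dual_bound (Amat N m mt) (cvec N m mt D)
          (bvec N m mt a) _ hx01 hx02
          (by rw [primal_set_eq D a, ← hPsetdef]; exact hPbdd) hε
        rw [primal_set_eq D a, ← hPsetdef] at hy2
        set yd : Fin N → Fin m → ℝ := fun t i => y (.inl (.inl (t, i))) with hyd
        set zd : ∀ t : Fin N, Fin (mt t) → ℝ :=
          fun t => fun j : Fin (mt t) => y (.inl (.inr ⟨t, j⟩)) with hzd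
        have hVd : DualFeasible N m mt D (fun i => ∑ t, yd t i) yd zd
            (fun t i j => D t i j + yd t i + zd t j) := by
          refine ⟨fun i => rfl, fun t => ⟨fun i j => rfl, fun i j => ?_⟩⟩
          have := hy1 (.inr ⟨t, (i, j)⟩)
          rw [colPi] at this
          simp only [cvec] at this
          show 0 ≤ D t i j + yd t i + zd t j
          simp only [hyd, hzd]
          linarith
        have hmem : dualObj N m mt a (fun i => ∑ t, yd t i) zd ∈ Dset :=
          ⟨_, _, _, _, hVd, rfl⟩
        have hle : dualObj N m mt a (fun i => ∑ t, yd t i) zd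
            ≤ ∑ k, bvec N m mt a k * y k := by
          rw [bdot]
          unfold dualObj
          have hne : Nonempty (Fin m) := ⟨⟨0, hm⟩⟩
          have hsup : (⨆ i, ∑ t, yd t i) ≤ y (.inr ()) := by
            refine ciSup_le fun i => ?_
            have := hy1 (.inl i)
            rw [colW] at this
            simp only [cvec] at this
            simp only [hyd]
            linarith
          have hzz : ∑ t, ∑ j, zd t j * a t j
              = ∑ t, ∑ j, a t j * y (.inl (.inr ⟨t, j⟩)) :=
            Finset.sum_congr rfl fun t _ => Finset.sum_congr rfl fun j _ => mul_comm _ _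
          linarith
        have hfin := csInf_le hDbdd hmem
        linarith
      linarith
    · refine le_csInf hPne fun p hp => ?_
      rw [neg_le]
      refine le_csInf hDne fun d hd => ?_
      have := hweak p hp d hd
      linarith
  · intro ustar Vstar ystar zstar lamstar Lamstar hK
    exact kkt_zero_gap D a ustar Vstar ystar zstar lamstar Lamstar hK
end

section
/- For any β > 0 and any λ, s ∈ ℝ^m, the function f(u) := max_{1≤i≤m} u_i − ⟨λ, u⟩ + (β/2)‖s − u‖² has a unique global minimizer over ℝ^m, given by u* = (β^{-1}λ + s) − β^{-1}P, where P is the unique point of Δ_m closest in Euclidean norm to λ + βs. -/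
/-!
Put `z = λ + βs` and `v = β⁻¹(z − P)`, so that `β(s − v) = P − λ`. Expanding the square,
`f u = f v + (max u − ⟨P, u⟩) − (max v − ⟨P, v⟩) + (β/2)‖u − v‖²`.
Since `P ∈ Δ_m`, `⟨P, u⟩ ≤ max u` for every `u`; and the variational inequality of the
projection, tested at the vertices `e_i` of the simplex, gives `v i ≤ ⟨P, v⟩`, i.e.
`max v = ⟨P, v⟩`. Hence `f u ≥ f v + (β/2)‖u − v‖²`, so `v` is the unique minimizer.
-/

/-- The unit simplex `Δ_m`, viewed inside the Euclidean space `ℝ^m`. -/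
def simplexSetE (m : ℕ) : Set (EuclideanSpace ℝ (Fin m)) :=
  {w | (∀ i, 0 ≤ w i) ∧ ∑ i, w i = 1}

/-- The objective `f(u) = max_i u_i − ⟨λ, u⟩ + (β/2)‖s − u‖²`. -/
noncomputable def objStep1 (m : ℕ) (β : ℝ) (lam s : EuclideanSpace ℝ (Fin m))
    (u : EuclideanSpace ℝ (Fin m)) : ℝ :=
  (⨆ i, u i) - ∑ i, lam i * u i + (β / 2) * ‖s - u‖ ^ 2

open scoped RealInnerProductSpace

theorem real_inner_sub_le_zero_of_forall_norm_sub_le {F : Type*} [NormedAddCommGroup F]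
    [InnerProductSpace ℝ F] {K : Set F} (hK : Convex ℝ K) {u v : F} (hv : v ∈ K)
    (hmin : ∀ w ∈ K, ‖u - v‖ ≤ ‖u - w‖) : ∀ w ∈ K, ⟪u - v, w - v⟫ ≤ 0 := by
  have : Nonempty K := ⟨⟨v, hv⟩⟩
  refine (norm_eq_iInf_iff_real_inner_le_zero hK hv).1 (le_antisymm ?_ ?_)
  · exact le_ciInf fun w => hmin w w.2
  · exact ciInf_le (f := fun w : K => ‖u - w‖)
      ⟨0, Set.forall_mem_range.2 fun _ => norm_nonneg _⟩ ⟨v, hv⟩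

theorem unique_minimizer_of_quadratic_growth {E : Type*} [NormedAddCommGroup E]
    {f : E → ℝ} {v : E} {c : ℝ} (hc : 0 < c) (hgrowth : ∀ u, f v + c * ‖u - v‖ ^ 2 ≤ f u) :
    (∀ u, f v ≤ f u) ∧ ∀ u, (∀ u', f u ≤ f u') → u = v := by
  refine ⟨fun u => le_of_add_le_of_nonneg_left (hgrowth u) (by positivity), fun u hu => ?_⟩
  have hsq : c * ‖u - v‖ ^ 2 ≤ 0 := by linarith [hgrowth u, hu v]
  have hzero : ‖u - v‖ ^ 2 = 0 :=
    le_antisymm (nonpos_of_mul_nonpos_right hsq hc) (by positivity)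
  simpa [sub_eq_zero] using hzero

namespace simplexSetE

variable {m : ℕ}

theorem convex : Convex ℝ (simplexSetE m) := by
  intro x hx y hy a b ha hb hab
  refine ⟨fun i => ?_, ?_⟩
  · have := hx.1 i
    have := hy.1 i
    simp only [PiLp.add_apply, PiLp.smul_apply, smul_eq_mul]
    positivity
  · simp only [PiLp.add_apply, PiLp.smul_apply, smul_eq_mul, Finset.sum_add_distrib,
      ← Finset.mul_sum, hx.2, hy.2, hab, mul_one]

theorem single_mem (i : Fin m) : EuclideanSpace.single i (1 : ℝ) ∈ simplexSetE m := by
  refine ⟨fun j => ?_, by simp⟩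
  rw [PiLp.single_apply]
  split_ifs <;> norm_num

theorem nonempty_index {P : EuclideanSpace ℝ (Fin m)} (hP : P ∈ simplexSetE m) :
    Nonempty (Fin m) := by
  by_contra h
  have := hP.2
  simp_all [not_nonempty_iff]

theorem inner_le_iSup {P : EuclideanSpace ℝ (Fin m)} (hP : P ∈ simplexSetE m)
    (u : EuclideanSpace ℝ (Fin m)) : ⟪P, u⟫ ≤ ⨆ i, u i := by
  rw [PiLp.inner_apply]
  calc ∑ i, ⟪P i, u i⟫ = ∑ i, P i * u i := by simp [mul_comm]
    _ ≤ ∑ i, P i * ⨆ j, u j :=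
      Finset.sum_le_sum fun i _ =>
        mul_le_mul_of_nonneg_left (le_ciSup (Set.finite_range u).bddAbove i) (hP.1 i)
    _ = ⨆ j, u j := by rw [← Finset.sum_mul, hP.2, one_mul]

/-- `P ∈ ∂(max)(x)` as soon as `x` lies in the normal cone of the simplex at `P`. -/
theorem iSup_eq_inner_of_forall_inner_sub_nonpos {P x : EuclideanSpace ℝ (Fin m)}
    (hP : P ∈ simplexSetE m) (hnormal : ∀ q ∈ simplexSetE m, ⟪x, q - P⟫ ≤ 0) :
    (⨆ i, x i) = ⟪P, x⟫ := by
  have := nonempty_index hP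
  refine le_antisymm (ciSup_le fun i => ?_) (inner_le_iSup hP x)
  have hvertex := hnormal _ (single_mem i)
  rw [inner_sub_right, EuclideanSpace.inner_single_right, real_inner_comm] at hvertex
  simpa using hvertex

end simplexSetE

theorem sum_mul_eq_inner {m : ℕ} (x u : EuclideanSpace ℝ (Fin m)) :
    ∑ i, x i * u i = ⟪x, u⟫ := by
  simp [PiLp.inner_apply, mul_comm]

theorem objStep1_eq {m : ℕ} {β : ℝ} {lam s P v : EuclideanSpace ℝ (Fin m)}
    (hsv : β • (s - v) = P - lam) (u : EuclideanSpace ℝ (Fin m)) :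
    objStep1 m β lam s u = objStep1 m β lam s v + ((⨆ i, u i) - ⟪P, u⟫)
      - ((⨆ i, v i) - ⟪P, v⟫) + β / 2 * ‖u - v‖ ^ 2 := by
  have hinner : ⟪P, u - v⟫ = ⟪lam, u - v⟫ + β * ⟪s - v, u - v⟫ := by
    rw [← real_inner_smul_left, hsv, inner_sub_left]
    ring
  unfold objStep1
  rw [sum_mul_eq_inner, sum_mul_eq_inner, show s - u = (s - v) - (u - v) by abel,
    norm_sub_sq_real]
  linarith [inner_sub_right (𝕜 := ℝ) P u v, inner_sub_right (𝕜 := ℝ) lam u v]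

theorem objStep1_add_sq_le {m : ℕ} {β : ℝ} {lam s P v : EuclideanSpace ℝ (Fin m)}
    (hP : P ∈ simplexSetE m) (hv : (⨆ i, v i) = ⟪P, v⟫) (hsv : β • (s - v) = P - lam)
    (u : EuclideanSpace ℝ (Fin m)) :
    objStep1 m β lam s v + β / 2 * ‖u - v‖ ^ 2 ≤ objStep1 m β lam s u := by
  rw [objStep1_eq hsv u, hv]
  linarith [simplexSetE.inner_le_iSup hP u]

theorem stmt_8_general (m : ℕ) (β : ℝ) (hβ : 0 < β)
    (lam s P : EuclideanSpace ℝ (Fin m))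
    (hP : P ∈ simplexSetE m ∧
      ∀ q ∈ simplexSetE m, ‖lam + β • s - P‖ ≤ ‖lam + β • s - q‖) :
    (∀ u, objStep1 m β lam s (β⁻¹ • lam + s - β⁻¹ • P) ≤ objStep1 m β lam s u) ∧
    ∀ u, (∀ u', objStep1 m β lam s u ≤ objStep1 m β lam s u') →
      u = β⁻¹ • lam + s - β⁻¹ • P := by
  set v := β⁻¹ • lam + s - β⁻¹ • P
  have hv : v = β⁻¹ • (lam + β • s - P) := by
    simp only [v, smul_sub, smul_add, smul_smul, inv_mul_cancel₀ hβ.ne', one_smul]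
  have hsv : β • (s - v) = P - lam := by
    rw [hv, smul_sub, smul_smul, mul_inv_cancel₀ hβ.ne', one_smul]
    abel
  have hprojection :=
    real_inner_sub_le_zero_of_forall_norm_sub_le simplexSetE.convex hP.1 hP.2
  have hnormal : ∀ q ∈ simplexSetE m, ⟪v, q - P⟫ ≤ 0 := fun q hq => by
    rw [hv, real_inner_smul_left]
    exact mul_nonpos_of_nonneg_of_nonpos (inv_nonneg.2 hβ.le) (hprojection q hq)
  exact unique_minimizer_of_quadratic_growth (half_pos hβ) <| objStep1_add_sq_le hP.1
    (simplexSetE.iSup_eq_inner_of_forall_inner_sub_nonpos hP.1 hnormal) hsv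

/-- `f(u) = max_i u_i − ⟨λ,u⟩ + (β/2)‖s−u‖²` has the unique global
minimizer `u* = (β⁻¹λ + s) − β⁻¹ P`, where `P` is the Euclidean projection of
`λ + βs` onto the unit simplex. -/
theorem stmt_8 (m : ℕ) (hm : 0 < m) (β : ℝ) (hβ : 0 < β)
    (lam s P : EuclideanSpace ℝ (Fin m))
    (hP : P ∈ simplexSetE m ∧
      ∀ q ∈ simplexSetE m, ‖lam + β • s - P‖ ≤ ‖lam + β • s - q‖) :
    (∀ u, objStep1 m β lam s (β⁻¹ • lam + s - β⁻¹ • P) ≤ objStep1 m β lam s u) ∧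
    ∀ u, (∀ u', objStep1 m β lam s u ≤ objStep1 m β lam s u') →
      u = β⁻¹ • lam + s - β⁻¹ • P :=
  stmt_8_general m β hβ lam s P hP
end

section
/- For every β > 0 and every τ ∈ (0, (1+√5)/2), the matrix M := blkdiag(0_{n₁×n₁}, βC + βBᵀB, (τβ)^{-1} I_{n₁}) + s_τ β · [[AᵀA, AᵀB, 0], [BᵀA, BᵀB, 0], [0, 0, 0]] is positive definite, where s_τ := (5 − τ − 3·min{τ, τ^{-1}})/4. -/
open Matrix

/-- Row index type of the big matrices: `n₁ = m(1 + ∑_t m_t)` coordinates. -/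
abbrev RowIdx (N m : ℕ) (mt : Fin N → ℕ) :=
  Fin m ⊕ (Σ t : Fin N, Fin (mt t) × Fin m)

/-- Column index type: `n₂ = mN + ∑_t m_t` coordinates. -/
abbrev ColIdx (N m : ℕ) (mt : Fin N → ℕ) :=
  (Fin N × Fin m) ⊕ (Σ t : Fin N, Fin (mt t))

/-- `A = blkdiag(−I_m, I_{m ∑_t m_t})`. -/
noncomputable def matA (N m : ℕ) (mt : Fin N → ℕ) :
    Matrix (RowIdx N m mt) (RowIdx N m mt) ℝ :=
  Matrix.fromBlocks (-1) 0 0 1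

/-- `B₁ = K₁ ⊗ I_m`, where `K₁` has first row all ones and, in block `t`,
`m_t` rows with entry `−1` in column `t`. -/
noncomputable def matB₁ (N m : ℕ) (mt : Fin N → ℕ) :
    Matrix (RowIdx N m mt) (Fin N × Fin m) ℝ :=
  Matrix.of fun r c =>
    match r with
    | Sum.inl i => if i = c.2 then 1 else 0
    | Sum.inr ⟨t, (_, i)⟩ => if t = c.1 ∧ i = c.2 then -1 else 0

/-- `B₂ = K₂ ⊗ e_m`, where `K₂` has first row zero and remaining rows
`−I_{∑_t m_t}`. -/
noncomputable def matB₂ (N m : ℕ) (mt : Fin N → ℕ) :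
    Matrix (RowIdx N m mt) (Σ t : Fin N, Fin (mt t)) ℝ :=
  Matrix.of fun r c =>
    match r with
    | Sum.inl _ => 0
    | Sum.inr ⟨t, (j, _)⟩ => if (⟨t, j⟩ : Σ t : Fin N, Fin (mt t)) = c then -1 else 0

/-- `B = [B₁ B₂]`. -/
noncomputable def matB (N m : ℕ) (mt : Fin N → ℕ) :
    Matrix (RowIdx N m mt) (ColIdx N m mt) ℝ :=
  Matrix.fromCols (matB₁ N m mt) (matB₂ N m mt)

/-- `C = [[B₁ᵀB₂(B₂ᵀB₂)⁻¹B₂ᵀB₁, 0], [0, 0]]`. -/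
noncomputable def matC (N m : ℕ) (mt : Fin N → ℕ) :
    Matrix (ColIdx N m mt) (ColIdx N m mt) ℝ :=
  Matrix.fromBlocks
    ((matB₁ N m mt)ᵀ * matB₂ N m mt * ((matB₂ N m mt)ᵀ * matB₂ N m mt)⁻¹ *
      ((matB₂ N m mt)ᵀ * matB₁ N m mt)) 0 0 0

/-- `s_τ = (5 − τ − 3 min{τ, τ⁻¹})/4`. -/
noncomputable def sTau (τ : ℝ) : ℝ := (5 - τ - 3 * min τ τ⁻¹) / 4

/-- `M = blkdiag(0, βC + βBᵀB, (τβ)⁻¹ I) + s_τ β [[AᵀA, AᵀB, 0], [BᵀA, BᵀB, 0], [0,0,0]]`,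
with blocks of sizes `n₁`, `n₂`, `n₁`. -/
noncomputable def matM (N m : ℕ) (mt : Fin N → ℕ) (β τ : ℝ) :
    Matrix (RowIdx N m mt ⊕ (ColIdx N m mt ⊕ RowIdx N m mt))
      (RowIdx N m mt ⊕ (ColIdx N m mt ⊕ RowIdx N m mt)) ℝ :=
  Matrix.fromBlocks
    ((sTau τ * β) • ((matA N m mt)ᵀ * matA N m mt))
    (Matrix.fromCols ((sTau τ * β) • ((matA N m mt)ᵀ * matB N m mt)) 0)
    (Matrix.fromRows ((sTau τ * β) • ((matB N m mt)ᵀ * matA N m mt)) 0)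
    (Matrix.fromBlocks
      (β • matC N m mt + β • ((matB N m mt)ᵀ * matB N m mt) +
        (sTau τ * β) • ((matB N m mt)ᵀ * matB N m mt))
      0 0 ((τ * β)⁻¹ • 1))

/-!
Write a vector as `(x₁, y, x₃)` with `y = (u, v)` and put `c = s_τ β`. The quadratic form of `M` is
`c ‖A x₁ + B y‖² + β yᵀ C y + β ‖B y‖² + (τβ)⁻¹ ‖x₃‖²`, a sum of nonnegative terms with positive
weights, since `s_τ > 0` on `(0, (1+√5)/2)` and `C = blkdiag(B₁ᵀB₂ G⁻¹ B₂ᵀB₁, 0)` with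
`G = B₂ᵀB₂ ≻ 0`. If it vanishes then `x₃ = 0`, `B y = 0` and `B₂ᵀB₁ u = 0`; applying `B₂ᵀ` to
`B₁ u + B₂ v = 0` gives `G v = 0`, so `v = 0`, then `u = 0` because `B₁` is injective, and
finally `x₁ = 0` because `A² = 1`. The term `β yᵀ C y` is indispensable: for `N ≥ 2` the matrix
`B` alone has a kernel.
-/

lemma Matrix.dotProduct_self_nonneg {R n : Type*} [Fintype n] [Ring R] [LinearOrder R]
    [IsStrictOrderedRing R] (v : n → R) : 0 ≤ v ⬝ᵥ v :=
  Finset.sum_nonneg fun i _ => mul_self_nonneg (v i)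

lemma Matrix.dotProduct_transpose_mul_mulVec {R ρ α κ : Type*} [CommSemiring R] [Fintype ρ]
    [Fintype α] [Fintype κ] (M : Matrix ρ α R) (P : Matrix ρ κ R) (a : α → R) (b : κ → R) :
    a ⬝ᵥ (Mᵀ * P) *ᵥ b = M *ᵥ a ⬝ᵥ P *ᵥ b := by
  rw [← mulVec_mulVec, dotProduct_mulVec, vecMul_transpose]

section ProjGram

variable {ρ α γ κ : Type*} [Fintype ρ] [Fintype α] [Fintype γ] [Fintype κ]

lemma sumElim_dotProduct_fromBlocks_zero_mulVec (X : Matrix α α ℝ) (u : α → ℝ) (v : κ → ℝ) :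
    Sum.elim u v ⬝ᵥ fromBlocks X 0 0 (0 : Matrix κ κ ℝ) *ᵥ Sum.elim u v = u ⬝ᵥ X *ᵥ u := by
  simp [fromBlocks_mulVec, sumElim_dotProduct_sumElim]

lemma Matrix.PosSemidef.fromBlocks_zero {X : Matrix α α ℝ} (hX : X.PosSemidef) :
    (fromBlocks X 0 0 (0 : Matrix κ κ ℝ)).PosSemidef := by
  refine .of_dotProduct_mulVec_nonneg (hX.isHermitian.fromBlocks (by simp) isHermitian_zero)
    fun x => ?_
  rw [star_trivial, ← Sum.elim_comp_inl_inr x, sumElim_dotProduct_fromBlocks_zero_mulVec]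
  simpa using hX.dotProduct_mulVec_nonneg (x ∘ Sum.inl)

variable [DecidableEq γ]

/-- `B₁ᵀ P B₁`, where `P = B₂ (B₂ᵀB₂)⁻¹ B₂ᵀ` is the orthogonal projection onto the range of `B₂`. -/
noncomputable abbrev projGram (B₁ : Matrix ρ α ℝ) (B₂ : Matrix ρ γ ℝ) : Matrix α α ℝ :=
  B₁ᵀ * B₂ * (B₂ᵀ * B₂)⁻¹ * (B₂ᵀ * B₁)

lemma dotProduct_projGram_mulVec (B₁ : Matrix ρ α ℝ) (B₂ : Matrix ρ γ ℝ) (u : α → ℝ) :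
    u ⬝ᵥ projGram B₁ B₂ *ᵥ u =
      (B₂ᵀ * B₁) *ᵥ u ⬝ᵥ (B₂ᵀ * B₂)⁻¹ *ᵥ ((B₂ᵀ * B₁) *ᵥ u) := by
  rw [projGram, show B₁ᵀ * B₂ = (B₂ᵀ * B₁)ᵀ by rw [transpose_mul, transpose_transpose],
    Matrix.mul_assoc, dotProduct_transpose_mul_mulVec, mulVec_mulVec]

lemma posSemidef_fromBlocks_projGram (B₁ : Matrix ρ α ℝ) (B₂ : Matrix ρ γ ℝ) :
    (fromBlocks (projGram B₁ B₂) 0 0 (0 : Matrix κ κ ℝ)).PosSemidef := by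
  have hG := (posSemidef_conjTranspose_mul_self B₂).inv.conjTranspose_mul_mul_same (B₂ᵀ * B₁)
  simp only [conjTranspose_eq_transpose_of_trivial, transpose_mul, transpose_transpose] at hG
  exact PosSemidef.fromBlocks_zero (by simpa only [Matrix.mul_assoc] using hG)

lemma eq_zero_of_fromCols_mulVec_eq_zero_of_projGram {B₁ : Matrix ρ α ℝ} {B₂ : Matrix ρ γ ℝ}
    (hB₁ : Function.Injective B₁.mulVec) (hB₂ : Function.Injective B₂.mulVec)
    {y : α ⊕ γ → ℝ} (hB : fromCols B₁ B₂ *ᵥ y = 0)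
    (hC : y ⬝ᵥ fromBlocks (projGram B₁ B₂) 0 0 0 *ᵥ y = 0) : y = 0 := by
  obtain ⟨u, v, rfl⟩ : ∃ u v, y = Sum.elim u v := ⟨_, _, (Sum.elim_comp_inl_inr y).symm⟩
  rw [fromCols_mulVec_sumElim] at hB
  rw [sumElim_dotProduct_fromBlocks_zero_mulVec, dotProduct_projGram_mulVec] at hC
  have hG : (B₂ᵀ * B₂).PosDef := by
    simpa using PosDef.conjTranspose_mul_self B₂ hB₂
  have hW : (B₂ᵀ * B₁) *ᵥ u = 0 := by
    by_contra hne
    have hpos := hG.inv.dotProduct_mulVec_pos hne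
    rw [star_trivial, hC] at hpos
    exact hpos.false
  have hv : v = 0 := by
    have hGv := congrArg (B₂ᵀ *ᵥ ·) hB
    simp only [mulVec_add, mulVec_mulVec, hW, zero_add, mulVec_zero] at hGv
    by_contra hne
    have hpos := hG.dotProduct_mulVec_pos hne
    rw [hGv, dotProduct_zero] at hpos
    exact hpos.false
  have hu : u = 0 := hB₁ (by simpa [hv] using hB)
  simp [hu, hv]

end ProjGram

section GramBlock

variable {ρ α κ γ : Type*} [Fintype ρ] [Fintype α] [Fintype κ] [Fintype γ] [DecidableEq γ]

/-- `blkdiag(0, βC + βBᵀB, d I) + c [A B 0]ᵀ [A B 0]`, the shape of `M`. -/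
abbrev gramBlock (A : Matrix ρ α ℝ) (B : Matrix ρ κ ℝ) (C : Matrix κ κ ℝ) (c β d : ℝ) :
    Matrix (α ⊕ (κ ⊕ γ)) (α ⊕ (κ ⊕ γ)) ℝ :=
  fromBlocks (c • (Aᵀ * A)) (fromCols (c • (Aᵀ * B)) 0) (fromRows (c • (Bᵀ * A)) 0)
    (fromBlocks (β • C + β • (Bᵀ * B) + c • (Bᵀ * B)) 0 0 (d • 1))

lemma sumElim_dotProduct_gramBlock_mulVec (A : Matrix ρ α ℝ) (B : Matrix ρ κ ℝ)
    (C : Matrix κ κ ℝ) (c β d : ℝ) (x₁ : α → ℝ) (y : κ → ℝ) (x₃ : γ → ℝ) :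
    Sum.elim x₁ (Sum.elim y x₃) ⬝ᵥ gramBlock A B C c β d *ᵥ Sum.elim x₁ (Sum.elim y x₃) =
      c * ((A *ᵥ x₁ + B *ᵥ y) ⬝ᵥ (A *ᵥ x₁ + B *ᵥ y)) + β * (y ⬝ᵥ C *ᵥ y) +
        β * (B *ᵥ y ⬝ᵥ B *ᵥ y) + d * (x₃ ⬝ᵥ x₃) := by
  simp only [fromBlocks_mulVec, Sum.elim_comp_inl, Sum.elim_comp_inr,
    fromCols_mulVec_sumElim, fromRows_mulVec, zero_mulVec, add_zero, zero_add, add_mulVec,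
    smul_mulVec, one_mulVec, Sum.elim_add_add, sumElim_dotProduct_sumElim, dotProduct_add,
    dotProduct_smul, smul_eq_mul, add_dotProduct, dotProduct_zero,
    dotProduct_transpose_mul_mulVec]
  ring

lemma posDef_gramBlock {A : Matrix ρ α ℝ} {B : Matrix ρ κ ℝ} {C : Matrix κ κ ℝ} {c β d : ℝ}
    (hc : 0 < c) (hβ : 0 < β) (hd : 0 < d) (hA : Function.Injective A.mulVec)
    (hC : C.PosSemidef) (hker : ∀ y, B *ᵥ y = 0 → y ⬝ᵥ C *ᵥ y = 0 → y = 0) :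
    (gramBlock (γ := γ) A B C c β d).PosDef := by
  refine .of_dotProduct_mulVec_pos ?_ fun x hx => ?_
  · have hCt : Cᵀ = C := by simpa only [conjTranspose_eq_transpose_of_trivial] using hC.1.eq
    rw [IsHermitian, conjTranspose_eq_transpose_of_trivial]
    simp [fromBlocks_transpose, transpose_fromCols, transpose_fromRows, transpose_mul, hCt]
  obtain ⟨x₁, y, x₃, rfl⟩ : ∃ x₁ y x₃, x = Sum.elim x₁ (Sum.elim y x₃) :=
    ⟨_, _, _, by ext (i | i | i) <;> rfl⟩
  rw [star_trivial, sumElim_dotProduct_gramBlock_mulVec]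
  have h₁ := mul_nonneg hc.le (dotProduct_self_nonneg (A *ᵥ x₁ + B *ᵥ y))
  have h₂ := mul_nonneg hβ.le (by simpa using hC.dotProduct_mulVec_nonneg y)
  have h₃ := mul_nonneg hβ.le (dotProduct_self_nonneg (B *ᵥ y))
  have h₄ := mul_nonneg hd.le (dotProduct_self_nonneg x₃)
  by_contra! hle
  have hx₃ : x₃ = 0 := by simpa [hd.ne'] using (by linarith : d * (x₃ ⬝ᵥ x₃) = 0)
  have hBy : B *ᵥ y = 0 := by simpa [hβ.ne'] using (by linarith : β * (B *ᵥ y ⬝ᵥ B *ᵥ y) = 0)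
  have hy : y = 0 :=
    hker y hBy (by simpa [hβ.ne'] using (by linarith : β * (y ⬝ᵥ C *ᵥ y) = 0))
  have hx₁ : x₁ = 0 := hA <| by
    simpa [hy, hc.ne'] using (by linarith : c * ((A *ᵥ x₁ + B *ᵥ y) ⬝ᵥ (A *ᵥ x₁ + B *ᵥ y)) = 0)
  exact hx (by simp [hx₁, hy, hx₃])

end GramBlock

lemma sTau_pos {τ : ℝ} (hτ₀ : 0 < τ) (hτ : τ < (1 + Real.sqrt 5) / 2) : 0 < sTau τ := by
  unfold sTau
  rcases le_total τ 1 with h | h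
  · rw [min_eq_left (h.trans ((one_le_inv₀ hτ₀).mpr h))]
    linarith
  · rw [min_eq_right ((inv_le_one_of_one_le₀ h).trans h), ← div_eq_mul_inv]
    have hτ₄ : τ ≤ 4 := by
      nlinarith [Real.sq_sqrt (show (0 : ℝ) ≤ 5 by norm_num), Real.sqrt_nonneg 5]
    -- `(5 - τ) τ - 3 = (τ - 1)(4 - τ) + 1`
    have : 3 / τ < 5 - τ := by
      rw [div_lt_iff₀ hτ₀]
      nlinarith [mul_nonneg (sub_nonneg.2 h) (sub_nonneg.2 hτ₄)]
    linarith

section ConstraintMatrices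

variable (N m : ℕ) (mt : Fin N → ℕ)

lemma matA_mul_self : matA N m mt * matA N m mt = 1 := by
  simp [matA, fromBlocks_multiply, ← fromBlocks_one]

lemma matA_mulVec_injective : Function.Injective (matA N m mt).mulVec :=
  Function.Involutive.injective fun x => by rw [mulVec_mulVec, matA_mul_self, one_mulVec]

@[simp]
lemma matB₁_mulVec_inr (u : Fin N × Fin m → ℝ) (t : Fin N) (j : Fin (mt t)) (i : Fin m) :
    (matB₁ N m mt *ᵥ u) (Sum.inr ⟨t, (j, i)⟩) = -u (t, i) := by
  simp [mulVec, dotProduct, matB₁, Fintype.sum_prod_type, ite_and]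

@[simp]
lemma matB₂_mulVec_inr (v : (Σ t : Fin N, Fin (mt t)) → ℝ) (t : Fin N) (j : Fin (mt t))
    (i : Fin m) : (matB₂ N m mt *ᵥ v) (Sum.inr ⟨t, (j, i)⟩) = -v ⟨t, j⟩ := by
  simp [mulVec, dotProduct, matB₂]

variable {N m mt}

lemma matB₁_mulVec_injective (hmt : ∀ t, 0 < mt t) : Function.Injective (matB₁ N m mt).mulVec := by
  intro u w h
  ext ⟨t, i⟩
  simpa using congrFun h (Sum.inr ⟨t, (⟨0, hmt t⟩, i)⟩)

lemma matB₂_mulVec_injective (hm : 0 < m) : Function.Injective (matB₂ N m mt).mulVec := by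
  intro v w h
  ext ⟨t, j⟩
  simpa using congrFun h (Sum.inr ⟨t, (j, ⟨0, hm⟩)⟩)

end ConstraintMatrices

theorem stmt_12_general (N m : ℕ) (hm : 0 < m)
    (mt : Fin N → ℕ) (hmt : ∀ t, 0 < mt t)
    (β τ : ℝ) (hβ : 0 < β) (hτ : 0 < τ ∧ τ < (1 + Real.sqrt 5) / 2) :
    (matM N m mt β τ).PosDef :=
  posDef_gramBlock (mul_pos (sTau_pos hτ.1 hτ.2) hβ) hβ (inv_pos.2 (mul_pos hτ.1 hβ))
    (matA_mulVec_injective N m mt) (posSemidef_fromBlocks_projGram _ _)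
    fun _ hB hC => eq_zero_of_fromCols_mulVec_eq_zero_of_projGram
      (matB₁_mulVec_injective hmt) (matB₂_mulVec_injective hm) hB hC

/-- for every `β > 0` and `τ ∈ (0, (1+√5)/2)`, the matrix `M` is
positive definite. -/
theorem stmt_12 (N m : ℕ) (hN : 0 < N) (hm : 0 < m)
    (mt : Fin N → ℕ) (hmt : ∀ t, 0 < mt t)
    (β τ : ℝ) (hβ : 0 < β) (hτ : 0 < τ ∧ τ < (1 + Real.sqrt 5) / 2) :
    (matM N m mt β τ).PosDef :=
  stmt_12_general N m hm mt hmt β τ hβ hτ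
end

section
/- For any u, λ ∈ ℝ^m, the following are equivalent: (i) λ ∈ Δ_m and ⟨u, λ⟩ = max_{1≤i≤m} u_i; (ii) λ is the unique point of Δ_m closest in Euclidean norm to λ + u. -/
/-!
Since `λ ∈ Δ_m`, the variational inequality for projections onto a closed convex set says that
`λ` is the nearest point of `Δ_m` to `λ + u` iff `⟨u, q - λ⟩ ≤ 0` for every `q ∈ Δ_m`, i.e. iff `λ`
maximises the linear functional `⟨u, ·⟩` on `Δ_m`. On the simplex this functional is a convex
combination of the `u_i`, so its maximum is `max_i u_i`, attained at the vertex of a maximal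
coordinate.
-/

open RealInnerProductSpace

theorem forall_norm_sub_le_iff_real_inner_le_zero {F : Type*} [NormedAddCommGroup F]
    [InnerProductSpace ℝ F] {K : Set F} (hK : Convex ℝ K) {x v : F} (hv : v ∈ K) :
    (∀ w ∈ K, ‖x - v‖ ≤ ‖x - w‖) ↔ ∀ w ∈ K, ⟪x - v, w - v⟫ ≤ 0 := by
  have : Nonempty K := ⟨⟨v, hv⟩⟩
  have hbdd : BddBelow (Set.range fun w : K ↦ ‖x - w‖) :=
    ⟨0, by rintro _ ⟨w, rfl⟩; positivity⟩
  rw [← norm_eq_iInf_iff_real_inner_le_zero hK hv]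
  constructor
  · intro h
    exact le_antisymm (le_ciInf fun w ↦ h w w.2) (ciInf_le hbdd ⟨v, hv⟩)
  · intro h w hw
    exact h ▸ ciInf_le hbdd ⟨w, hw⟩

section stdSimplex

variable {ι : Type*} [Fintype ι]

theorem sum_mul_le_iSup_of_mem_stdSimplex (u : ι → ℝ) {w : ι → ℝ} (hw : w ∈ stdSimplex ℝ ι) :
    ∑ i, u i * w i ≤ ⨆ i, u i :=
  calc ∑ i, u i * w i ≤ ∑ i, (⨆ j, u j) * w i :=
        Finset.sum_le_sum fun i _ ↦
          mul_le_mul_of_nonneg_right (le_ciSup (Set.finite_range u).bddAbove i) (hw.1 i)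
    _ = ⨆ j, u j := by rw [← Finset.mul_sum, hw.2, mul_one]

theorem forall_sum_mul_le_iff_eq_iSup [Nonempty ι] (u : ι → ℝ) {v : ι → ℝ}
    (hv : v ∈ stdSimplex ℝ ι) :
    (∀ w ∈ stdSimplex ℝ ι, ∑ i, u i * w i ≤ ∑ i, u i * v i) ↔ ∑ i, u i * v i = ⨆ i, u i := by
  classical
  constructor
  · intro h
    obtain ⟨i₀, hi₀⟩ : ∃ i, u i = ⨆ i, u i := exists_eq_ciSup_of_finite
    have hvertex := h _ (single_mem_stdSimplex ℝ i₀)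
    simp only [Pi.single_apply, mul_ite, mul_one, mul_zero, Finset.sum_ite_eq',
      Finset.mem_univ, if_true, hi₀] at hvertex
    exact le_antisymm (sum_mul_le_iSup_of_mem_stdSimplex u hv) hvertex
  · intro h w hw
    exact h ▸ sum_mul_le_iSup_of_mem_stdSimplex u hw

end stdSimplex

-- `simplexSetE m` is definitionally `WithLp.ofLp ⁻¹' stdSimplex ℝ (Fin m)`.
theorem convex_simplexSetE (m : ℕ) : Convex ℝ (simplexSetE m) :=
  (convex_stdSimplex ℝ (Fin m)).linear_preimage (WithLp.linearEquiv 2 ℝ (Fin m → ℝ)).toLinearMap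

theorem EuclideanSpace.real_inner_eq_sum {ι : Type*} [Fintype ι] (x y : EuclideanSpace ℝ ι) :
    ⟪x, y⟫ = ∑ i, x i * y i := by
  simp [PiLp.inner_apply, mul_comm]

/-- `λ ∈ Δ_m` with `⟨u, λ⟩ = max_i u_i` if and only if `λ` is the
(unique) Euclidean nearest point of `Δ_m` to `λ + u`. -/
theorem stmt_13 (m : ℕ) (hm : 0 < m) (u lam : EuclideanSpace ℝ (Fin m)) :
    (lam ∈ simplexSetE m ∧ ∑ i, u i * lam i = ⨆ i, u i) ↔
    (lam ∈ simplexSetE m ∧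
      ∀ q ∈ simplexSetE m, ‖lam + u - lam‖ ≤ ‖lam + u - q‖) := by
  have : Nonempty (Fin m) := ⟨⟨0, hm⟩⟩
  refine and_congr_right fun hlam ↦ ?_
  rw [forall_norm_sub_le_iff_real_inner_le_zero (convex_simplexSetE m) hlam,
    add_sub_cancel_left]
  simp only [inner_sub_right, sub_nonpos, EuclideanSpace.real_inner_eq_sum]
  rw [← forall_sum_mul_le_iff_eq_iSup u hlam]
  exact ⟨fun h w hw ↦ h w hw, fun h w hw ↦ h (WithLp.toLp 2 w) hw⟩
end
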